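/- arXiv:2410.11818 — 5 statements merged into one kernel-verified Lean document; each statement's English description precedes it below -/
import Mathlib

section
/- Every semi-Clifford permutation gate on n qubits lies in 𝒞ₙ, the n-th level of the Clifford hierarchy. -/
open Matrix

/-- An `n`-qubit gate: a `2^n × 2^n` complex matrix with rows and columns indexed
by bitstrings `v ∈ 𝔽₂ⁿ`. -/
abbrev Gate (n : ℕ) := Matrix (Fin n → ZMod 2) (Fin n → ZMod 2) ℂ

def IsUnitaryGate {n : ℕ} (U : Gate n) : Prop :=
  U ∈ Matrix.unitaryGroup (Fin n → ZMod 2) ℂ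

/-- The Pauli group `𝒫ₙ`: all matrices `c · X^u Z^v` with `c ∈ {1, -1, i, -i}`,
which is exactly the set of matrices `c · P₁ ⊗ ⋯ ⊗ Pₙ` with `Pⱼ ∈ {I₂, X, Y, Z}`. -/
def PauliGroup (n : ℕ) : Set (Gate n) :=
  { P | ∃ (c : ℂ) (u v : Fin n → ZMod 2),
      (c = 1 ∨ c = -1 ∨ c = Complex.I ∨ c = -Complex.I) ∧
      P = Matrix.of fun a b =>
        if a = b + u then c * (-1 : ℂ) ^ (∑ i, (v i * b i).val) else 0 }

/-- The Clifford hierarchy: `𝒞₁ = 𝒫ₙ`, and for `k ≥ 2`,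
`𝒞ₖ = {U unitary : U P U† ∈ 𝒞ₖ₋₁ for all P ∈ 𝒫ₙ}`.  (`CliffordHierarchy n k` is `𝒞ₖ`.) -/
def CliffordHierarchy (n : ℕ) : ℕ → Set (Gate n)
  | 0 => PauliGroup n
  | 1 => PauliGroup n
  | k + 2 => { U | IsUnitaryGate U ∧
      ∀ P ∈ PauliGroup n, U * P * Uᴴ ∈ CliffordHierarchy n (k + 1) }

/-- The permutation gate mapping `|v⟩` to `|σ v⟩`. -/
def permGate {n : ℕ} (σ : Equiv.Perm (Fin n → ZMod 2)) : Gate n :=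
  Matrix.of fun a b => if a = σ b then 1 else 0

def IsPermGate {n : ℕ} (U : Gate n) : Prop := ∃ σ, U = permGate σ

def IsDiagonalGate {n : ℕ} (U : Gate n) : Prop :=
  IsUnitaryGate U ∧ ∀ a b, a ≠ b → U a b = 0

/-- A gate is semi-Clifford if it is `φ₁ d φ₂` with `φ₁, φ₂` Clifford and `d` a diagonal gate. -/
def IsSemiClifford {n : ℕ} (U : Gate n) : Prop :=
  ∃ φ₁ d φ₂ : Gate n, φ₁ ∈ CliffordHierarchy n 2 ∧ φ₂ ∈ CliffordHierarchy n 2 ∧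
    IsDiagonalGate d ∧ U = φ₁ * d * φ₂

def IsCliffordPerm {n : ℕ} (U : Gate n) : Prop :=
  IsPermGate U ∧ U ∈ CliffordHierarchy n 2

/-!
Write `π = φ₁ d φ₂`, where `π` permutes basis states by `σ`. As `d` commutes with every `Z^v`,
`π` conjugates `φ₂† Z^v φ₂ ∝ X^{uQ v} Z^{wQ v}` to `φ₁ Z^v φ₁† ∝ X^{uR v} Z^{wR v}`, two
Lagrangian families of Paulis with linear parameters. On `σ` this means `σ (x + uQ v) = σ x + uR v`,
and `σ` is affine modulo `uR K` with `K = ker wR`, which is the orthogonal of `range wR`. Hence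
`σ = A ∘ S` with `A` an affine automorphism of `𝔽₂ⁿ`, which is Clifford, and `S x = x + g x` a
shear whose `g` takes values in, and is invariant under, the subspace `uQ K`; so `g` has degree at
most `n - 1`. Conjugating a Pauli by a shear of degree `k` gives a shear of degree `k - 1` (a
forward difference), and a shear of degree `0` is a Pauli, so `S ∈ 𝒞ₙ`, and then `A S ∈ 𝒞ₙ`.
-/

open fwdDiff Function

section SignCharacter

def signChar : AddChar (ZMod 2) ℂ where
  toFun a := (-1) ^ a.val
  map_zero_eq_one' := rfl
  map_add_eq_mul' a b := by rw [← pow_add, ZMod.val_add, ← neg_one_pow_eq_pow_mod_two]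

lemma signChar_apply (a : ZMod 2) : signChar a = (-1) ^ a.val := rfl

lemma signChar_mul_self (a : ZMod 2) : signChar a * signChar a = 1 := by
  rw [← AddChar.map_add_eq_mul, ZModModule.add_self, AddChar.map_zero_eq_one]

lemma sq_signChar (a : ZMod 2) : signChar a ^ 2 = 1 := by
  rw [sq, signChar_mul_self]

lemma signChar_ne_zero (a : ZMod 2) : signChar a ≠ 0 :=
  left_ne_zero_of_mul_eq_one (signChar_mul_self a)

@[simp] lemma star_signChar (a : ZMod 2) : star (signChar a) = signChar a := by
  simp [signChar_apply]

lemma signChar_injective : Injective signChar := by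
  intro a b h
  rw [signChar_apply, signChar_apply] at h
  fin_cases a <;> fin_cases b <;> first | rfl | norm_num [ZMod.val] at h

lemma AddChar.map_sum_eq_prod {A M ι : Type*} [AddCommMonoid A] [CommMonoid M]
    (ψ : AddChar A M) (s : Finset ι) (f : ι → A) : ψ (∑ i ∈ s, f i) = ∏ i ∈ s, ψ (f i) := by
  classical
  induction s using Finset.induction_on with
  | empty => simp
  | insert a s ha ih => rw [Finset.sum_insert ha, Finset.prod_insert ha, ψ.map_add_eq_mul, ih]

lemma neg_one_pow_sum_val {n : ℕ} (v b : Fin n → ZMod 2) :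
    (-1 : ℂ) ^ (∑ i, (v i * b i).val) = signChar (v ⬝ᵥ b) := by
  rw [dotProduct, AddChar.map_sum_eq_prod, ← Finset.prod_pow_eq_pow_sum]
  rfl

end SignCharacter

section MonomialMatrix

variable {ι : Type*} [DecidableEq ι]

def monomialMatrix (f : ι → ι) (γ : ι → ℂ) : Matrix ι ι ℂ :=
  of fun a b => if a = f b then γ b else 0

lemma monomialMatrix_mul [Fintype ι] (f g : ι → ι) (γ δ : ι → ℂ) :
    monomialMatrix f γ * monomialMatrix g δ =
      monomialMatrix (f ∘ g) (fun b => γ (g b) * δ b) := by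
  ext a b
  rw [mul_apply, Finset.sum_eq_single (g b) (fun k _ hk => by simp [monomialMatrix, hk]) (by simp)]
  by_cases h : a = f (g b) <;> simp [monomialMatrix, h]

lemma conjTranspose_monomialMatrix {f g : ι → ι} (hgf : LeftInverse g f)
    (hfg : RightInverse g f) (γ : ι → ℂ) :
    (monomialMatrix f γ)ᴴ = monomialMatrix g (fun b => star (γ (g b))) := by
  ext a b
  simp only [monomialMatrix, conjTranspose_apply, of_apply]
  by_cases h : b = f a
  · rw [if_pos h, if_pos (by rw [h, hgf]), h, hgf]
  · rw [if_neg h, if_neg (by rintro rfl; exact h (hfg b).symm), star_zero]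

lemma monomialMatrix_id_one : monomialMatrix (id : ι → ι) 1 = 1 := by
  ext a b
  simp [monomialMatrix, one_apply]

lemma monomialMatrix_conj [Fintype ι] {f g : ι → ι} (hgf : LeftInverse g f) (hfg : RightInverse g f)
    (h : ι → ι) (γ δ : ι → ℂ) :
    monomialMatrix f γ * monomialMatrix h δ * (monomialMatrix f γ)ᴴ =
      monomialMatrix (f ∘ h ∘ g) (fun b => γ (h (g b)) * δ (g b) * star (γ (g b))) := by
  rw [conjTranspose_monomialMatrix hgf hfg, monomialMatrix_mul, monomialMatrix_mul]
  rfl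

lemma monomialMatrix_mem_unitaryGroup [Fintype ι] {f g : ι → ι} (hgf : LeftInverse g f)
    (hfg : RightInverse g f) {γ : ι → ℂ} (hγ : ∀ b, star (γ b) * γ b = 1) :
    monomialMatrix f γ ∈ unitaryGroup ι ℂ := by
  rw [mem_unitaryGroup_iff', star_eq_conjTranspose, conjTranspose_monomialMatrix hgf hfg,
    monomialMatrix_mul, ← monomialMatrix_id_one]
  congr 1
  · exact funext hgf
  · funext b
    simp only [hgf b, hγ, Pi.one_apply]

lemma apply_eq_and_eq_of_monomialMatrix_eq {f f' : ι → ι} {γ γ' : ι → ℂ} (hγ : ∀ b, γ b ≠ 0)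
    (h : monomialMatrix f γ = monomialMatrix f' γ') (b : ι) : f b = f' b ∧ γ b = γ' b := by
  have hb := congr_fun₂ h (f b) b
  simp only [monomialMatrix, of_apply] at hb
  have hf : f b = f' b := by
    by_contra hne
    exact hγ b (hb.trans (if_neg hne))
  exact ⟨hf, hb.trans (if_pos hf)⟩

end MonomialMatrix

abbrev Bitstring (n : ℕ) := Fin n → ZMod 2

def IsPhase (c : ℂ) : Prop := c = 1 ∨ c = -1 ∨ c = Complex.I ∨ c = -Complex.I

namespace IsPhase

variable {c : ℂ}

lemma ne_zero (hc : IsPhase c) : c ≠ 0 := by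
  rcases hc with rfl | rfl | rfl | rfl <;> simp

lemma star_mul_self (hc : IsPhase c) : star c * c = 1 := by
  rcases hc with rfl | rfl | rfl | rfl <;> simp [Complex.conj_I]

lemma mul_star_self (hc : IsPhase c) : c * star c = 1 := by
  rw [mul_comm, hc.star_mul_self]

lemma mul_signChar (hc : IsPhase c) (a : ZMod 2) : IsPhase (c * signChar a) := by
  rcases neg_one_pow_eq_or ℂ a.val with h | h <;> rw [signChar_apply, h]
  · rwa [mul_one]
  · rcases hc with rfl | rfl | rfl | rfl <;> simp [IsPhase]

end IsPhase

section Pauli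

variable {n : ℕ}

/-- The Pauli operator `c · X^u Z^w`. -/
def pauli (c : ℂ) (u w : Bitstring n) : Gate n :=
  monomialMatrix (· + u) (fun b => c * signChar (w ⬝ᵥ b))

lemma mem_pauliGroup_iff {P : Gate n} :
    P ∈ PauliGroup n ↔ ∃ c u w, IsPhase c ∧ P = pauli c u w := by
  simp only [PauliGroup, pauli, monomialMatrix, neg_one_pow_sum_val]
  rfl

lemma pauli_mem_pauliGroup {c : ℂ} (hc : IsPhase c) (u w : Bitstring n) :
    pauli c u w ∈ PauliGroup n :=
  mem_pauliGroup_iff.2 ⟨c, u, w, hc, rfl⟩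

lemma pauli_mul (c c' : ℂ) (u u' w w' : Bitstring n) :
    pauli c u w * pauli c' u' w' = pauli (c * c' * signChar (w ⬝ᵥ u')) (u + u') (w + w') := by
  rw [pauli, pauli, monomialMatrix_mul]
  congr 1
  · funext b
    simp only [Function.comp_apply, add_assoc, add_comm u' u]
  · funext b
    simp only [dotProduct_add, add_dotProduct, AddChar.map_add_eq_mul]
    ring

lemma pauli_inj {c c' : ℂ} {u u' w w' : Bitstring n} (hc : c ≠ 0)
    (h : pauli c u w = pauli c' u' w') : c = c' ∧ u = u' ∧ w = w' := by
  have key := apply_eq_and_eq_of_monomialMatrix_eq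
    (fun b => mul_ne_zero hc (signChar_ne_zero _)) h
  have hcc : c = c' := by simpa using (key 0).2
  subst hcc
  refine ⟨rfl, by simpa using (key 0).1, dotProduct_eq w w' fun b => ?_⟩
  exact signChar_injective (mul_left_cancel₀ hc (key b).2)

lemma pauli_zero_zero (c : ℂ) : pauli c 0 (0 : Bitstring n) = c • 1 := by
  ext a b
  by_cases h : a = b <;> simp [pauli, monomialMatrix, one_apply, h]

lemma pauliGroup_finite : (PauliGroup n).Finite := by
  have : PauliGroup n ⊆ (fun p : ℂ × Bitstring n × Bitstring n => pauli p.1 p.2.1 p.2.2) ''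
      ({1, -1, Complex.I, -Complex.I} ×ˢ Set.univ) := by
    intro P hP
    obtain ⟨c, u, w, hc, rfl⟩ := mem_pauliGroup_iff.1 hP
    exact ⟨(c, u, w), ⟨by simpa [IsPhase] using hc, trivial⟩, rfl⟩
  exact ((Set.toFinite _).prod (Set.toFinite _)).image _ |>.subset this

def zGate (v : Bitstring n) : Gate n := pauli 1 0 v

lemma zGate_eq_diagonal (v : Bitstring n) :
    zGate v = diagonal fun b => signChar (v ⬝ᵥ b) := by
  ext a b
  by_cases h : a = b <;> simp [zGate, pauli, monomialMatrix, h]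

lemma zGate_add (a b : Bitstring n) : zGate (a + b) = zGate a * zGate b := by
  simp [zGate, pauli_mul]

lemma commute_zGate_of_isDiag {d : Gate n} (hd : d.IsDiag) (v : Bitstring n) :
    Commute d (zGate v) := by
  rw [← hd.diagonal_diag, zGate_eq_diagonal]
  exact (Commute.all _ _).map (diagonalRingHom _ ℂ)

lemma eq_zero_of_zGate_eq_smul_one {v : Bitstring n} {c : ℂ} (h : zGate v = c • 1) : v = 0 := by
  have hdiag (b : Bitstring n) : signChar (v ⬝ᵥ b) = c := by
    simpa [zGate_eq_diagonal] using congr_fun₂ h b b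
  refine dotProduct_eq_zero v fun b => signChar_injective ?_
  rw [hdiag, ← hdiag 0, dotProduct_zero, AddChar.map_zero_eq_one]

lemma AddMonoidHom.exists_eq_dotProduct (φ : Bitstring n →+ ZMod 2) :
    ∃ w : Bitstring n, ∀ x, φ x = w ⬝ᵥ x := by
  classical
  refine ⟨(dotProductEquiv (ZMod 2) (Fin n)).symm (φ.toZModLinearMap 2), fun x => ?_⟩
  rw [← dotProductEquiv_apply_apply, LinearEquiv.apply_symm_apply]
  rfl

end Pauli

section CliffordHierarchy

variable {n : ℕ}

lemma IsUnitaryGate.conjTranspose {U : Gate n} (hU : IsUnitaryGate U) : IsUnitaryGate Uᴴ := by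
  rw [IsUnitaryGate, ← star_eq_conjTranspose]
  exact Unitary.star_mem hU

lemma IsUnitaryGate.mul {U U' : Gate n} (hU : IsUnitaryGate U) (hU' : IsUnitaryGate U') :
    IsUnitaryGate (U * U') :=
  Submonoid.mul_mem _ hU hU'

lemma IsUnitaryGate.mul_conjTranspose_self {U : Gate n} (hU : IsUnitaryGate U) : U * Uᴴ = 1 :=
  mem_unitaryGroup_iff.1 hU

lemma IsUnitaryGate.conjTranspose_mul_self {U : Gate n} (hU : IsUnitaryGate U) : Uᴴ * U = 1 :=
  mem_unitaryGroup_iff'.1 hU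

lemma IsUnitaryGate.conjTranspose_conj {U : Gate n} (hU : IsUnitaryGate U) (A : Gate n) :
    Uᴴ * (U * A * Uᴴ) * U = A := by
  simp only [Matrix.mul_assoc, hU.conjTranspose_mul_self, Matrix.mul_one, ← Matrix.mul_assoc Uᴴ U,
    Matrix.one_mul]

lemma CliffordHierarchy.conjTranspose_mem_two {C : Gate n} (hC : C ∈ CliffordHierarchy n 2) :
    Cᴴ ∈ CliffordHierarchy n 2 := by
  have hinj : Set.InjOn (fun P => C * P * Cᴴ) (PauliGroup n) := fun P _ Q _ h => by
    simpa only [hC.1.conjTranspose_conj] using congr_arg (fun M => Cᴴ * M * C) h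
  have hsurj := ((pauliGroup_finite.injOn_iff_bijOn_of_mapsTo hC.2).1 hinj).surjOn
  refine ⟨hC.1.conjTranspose, fun P hP => ?_⟩
  obtain ⟨Q, hQ, rfl⟩ := hsurj hP
  rwa [conjTranspose_conjTranspose, hC.1.conjTranspose_conj]

theorem CliffordHierarchy.conj_mem {C : Gate n} (hC : C ∈ CliffordHierarchy n 2) :
    ∀ {k : ℕ} {U : Gate n}, U ∈ CliffordHierarchy n k → C * U * Cᴴ ∈ CliffordHierarchy n k
  | 0, _, hU => hC.2 _ hU
  | 1, _, hU => hC.2 _ hU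
  | k + 2, U, hU => by
    refine ⟨(hC.1.mul hU.1).mul hC.1.conjTranspose, fun P hP => ?_⟩
    have hP' : Cᴴ * P * C ∈ PauliGroup n := by
      have h := (conjTranspose_mem_two hC).2 P hP
      rwa [conjTranspose_conjTranspose] at h
    convert conj_mem hC (hU.2 _ hP') using 1
    simp only [conjTranspose_mul, conjTranspose_conjTranspose, Matrix.mul_assoc]

theorem CliffordHierarchy.mul_mem {C U : Gate n} {k : ℕ} (hC : C ∈ CliffordHierarchy n 2)
    (hU : U ∈ CliffordHierarchy n (k + 2)) : C * U ∈ CliffordHierarchy n (k + 2) := by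
  refine ⟨hC.1.mul hU.1, fun P hP => ?_⟩
  rw [conjTranspose_mul, show C * U * P * (Uᴴ * Cᴴ) = C * (U * P * Uᴴ) * Cᴴ by
    simp only [Matrix.mul_assoc]]
  exact conj_mem hC (hU.2 P hP)

end CliffordHierarchy

section Degree

variable {G M N : Type*} [AddCommGroup G] [AddCommGroup M] [AddCommGroup N]

/-- On `𝔽₂ⁿ` this is the polynomial degree, read off from iterated forward differences. -/
def DegreeLE : ℕ → (G → M) → Prop
  | 0, f => ∀ x y, f x = f y
  | k + 1, f => ∀ t, DegreeLE k (Δ_[t] f)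

lemma degreeLE_const (k : ℕ) (m : M) : DegreeLE k (fun _ : G => m) := by
  induction k generalizing m with
  | zero => exact fun _ _ => rfl
  | succ k ih => exact fun t => by rw [fwdDiff_const]; exact ih 0

namespace DegreeLE

variable {k : ℕ} {f g : G → M}

lemma add (hf : DegreeLE k f) (hg : DegreeLE k g) : DegreeLE k (f + g) := by
  induction k generalizing f g with
  | zero => intro x y; simp only [Pi.add_apply, hf x y, hg x y]
  | succ k ih => intro t; rw [fwdDiff_add]; exact ih (hf t) (hg t)

lemma comp_add_right (hf : DegreeLE k f) (a : G) : DegreeLE k (fun x => f (x + a)) := by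
  induction k generalizing f with
  | zero => exact fun x y => hf _ _
  | succ k ih =>
    intro t
    convert ih (hf t) using 1
    funext x
    exact fwdDiff_comp_add t f a x

lemma map (hf : DegreeLE k f) (φ : M →+ N) : DegreeLE k (φ ∘ f) := by
  induction k generalizing f with
  | zero => intro x y; simp only [Function.comp_apply, hf x y]
  | succ k ih =>
    intro t
    convert ih (hf t) using 1
    funext x
    simp [fwdDiff]

lemma exists_addMonoidHom (hf : DegreeLE 1 f) : ∃ φ : G →+ M, ∀ x, f x = φ x + f 0 := by
  refine ⟨AddMonoidHom.mk' (fun x => f x - f 0) fun x y => ?_, fun x => by simp⟩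
  have h := hf y x 0
  simp only [fwdDiff, zero_add] at h
  rw [← h]
  abel

end DegreeLE

end Degree

section Periodic

variable {G M : Type*} [AddCommGroup G] [Module (ZMod 2) G] [AddCommGroup M]

def periodSubmodule (f : G → M) : Submodule (ZMod 2) G :=
  AddSubgroup.toZModSubmodule 2
    { carrier := {w | Periodic f w}
      add_mem' := Periodic.add_period
      zero_mem' := fun x => by rw [add_zero]
      neg_mem' := Periodic.neg }

lemma periodic_fwdDiff_self [Module (ZMod 2) M] (f : G → M) (t : G) : Periodic (Δ_[t] f) t := by
  intro x
  rw [fwdDiff, fwdDiff, add_assoc, ZModModule.add_self, add_zero, ← neg_sub,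
    ZModModule.neg_eq_self]

lemma degreeLE_of_periodic [Module (ZMod 2) M] [FiniteDimensional (ZMod 2) G] {d : ℕ}
    (W : Submodule (ZMod 2) G) (hW : Module.finrank (ZMod 2) G ≤ Module.finrank (ZMod 2) W + d)
    {f : G → M} (hf : ∀ w ∈ W, Periodic f w) : DegreeLE d f := by
  induction d generalizing W f with
  | zero =>
    have hW : W = ⊤ := Submodule.eq_top_of_finrank_eq (le_antisymm (Submodule.finrank_le W) hW)
    intro x y
    simpa using (hf (y - x) (hW ▸ Submodule.mem_top) x).symm
  | succ d ih =>
    intro t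
    by_cases ht : t ∈ W
    · convert degreeLE_const d (0 : M) using 1
      funext x
      rw [fwdDiff, hf t ht x, sub_self]
    · have hlt : W < W ⊔ Submodule.span (ZMod 2) {t} :=
        lt_of_le_of_ne le_sup_left fun h =>
          ht (h ▸ Submodule.mem_sup_right (Submodule.mem_span_singleton_self t))
      have hrank := Submodule.finrank_lt_finrank_of_lt hlt
      refine ih (W ⊔ Submodule.span (ZMod 2) {t}) (by omega) fun w hw => ?_
      refine (sup_le (fun w hw x => ?_) ?_ : _ ≤ periodSubmodule (Δ_[t] f)) hw
      · simp only [fwdDiff, add_right_comm x w t, hf w hw (x + t), hf w hw x]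
      · rw [Submodule.span_le, Set.singleton_subset_iff]
        exact periodic_fwdDiff_self f t

lemma degreeLE_pred_finrank_of_periodic [FiniteDimensional (ZMod 2) G] {U : Submodule (ZMod 2) G}
    {g : G → G} (hgU : ∀ x, g x ∈ U) (hgp : ∀ y ∈ U, Periodic g y) :
    DegreeLE (Module.finrank (ZMod 2) G - 1) g := by
  rcases eq_or_ne U ⊥ with rfl | hU
  · convert degreeLE_const _ (0 : G) using 1
    exact funext fun x => (Submodule.mem_bot _).1 (hgU x)
  · have := Submodule.finrank_eq_zero.not.2 hU
    exact degreeLE_of_periodic U (by omega) hgp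

end Periodic

section Shear

variable {n : ℕ}

def shearGate (u : Bitstring n) (G : Bitstring n → Bitstring n) (c : ℂ) (w : Bitstring n)
    (H : Bitstring n → ZMod 2) : Gate n :=
  monomialMatrix (fun x => x + u + G x) (fun x => c * signChar (w ⬝ᵥ x + H x))

variable {Y : Submodule (ZMod 2) (Bitstring n)} {u : Bitstring n} {G : Bitstring n → Bitstring n}

lemma shear_leftInverse (hGY : ∀ x, G x ∈ Y) (hGp : ∀ y ∈ Y, Periodic G y) :
    LeftInverse (fun y => y + u + G (y + u)) (fun x => x + u + G x) := by
  intro x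
  simp only
  rw [show x + u + G x + u = x + G x by linear_combination ZModModule.add_self u,
    hGp _ (hGY x)]
  linear_combination ZModModule.add_self (G x)

lemma shear_rightInverse (hGY : ∀ x, G x ∈ Y) (hGp : ∀ y ∈ Y, Periodic G y) :
    RightInverse (fun y => y + u + G (y + u)) (fun x => x + u + G x) := by
  intro y
  simp only
  rw [hGp _ (hGY _)]
  linear_combination ZModModule.add_self u + ZModModule.add_self (G (y + u))

lemma shearGate_conj_pauli (hGY : ∀ x, G x ∈ Y) (hGp : ∀ y ∈ Y, Periodic G y)
    {H : Bitstring n → ZMod 2} (hHp : ∀ y ∈ Y, Periodic H y) {c : ℂ} (hc : IsPhase c)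
    (w : Bitstring n) (c' : ℂ) (u' w' : Bitstring n) :
    shearGate u G c w H * pauli c' u' w' * (shearGate u G c w H)ᴴ =
      shearGate u' (fun x => Δ_[u'] G (x + u)) c' w'
        (fun x => Δ_[u'] H (x + u) + w' ⬝ᵥ G (x + u) + (w ⬝ᵥ u' + w' ⬝ᵥ u)) := by
  rw [shearGate, pauli,
    monomialMatrix_conj (shear_leftInverse hGY hGp) (shear_rightInverse hGY hGp), shearGate]
  have hshift (x : Bitstring n) : x + u + G (x + u) + u' = x + u + u' + G (x + u) := by
    rw [add_right_comm]
  congr 1 <;> funext x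
  · simp only [Function.comp_apply, fwdDiff, hshift, hGp _ (hGY (x + u)) (x + u + u'),
      ZModModule.sub_eq_add]
    linear_combination ZModModule.add_self u
  · simp only [hshift, hHp _ (hGY (x + u)) (x + u + u'), hHp _ (hGY (x + u)) (x + u), fwdDiff,
      ZModModule.sub_eq_add, star_mul', star_signChar, dotProduct_add, AddChar.map_add_eq_mul]
    have hcancel : c * star c *
        (signChar (w ⬝ᵥ x) * signChar (w ⬝ᵥ u) * signChar (w ⬝ᵥ G (x + u))) ^ 2 = 1 := by
      simp only [mul_pow, sq_signChar, hc.mul_star_self, mul_one]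
    linear_combination (c' * signChar (w' ⬝ᵥ x) * signChar (w' ⬝ᵥ u) *
      signChar (w' ⬝ᵥ G (x + u)) * signChar (w ⬝ᵥ u') * signChar (H (x + u + u')) *
      signChar (H (x + u))) * hcancel

lemma shearGate_mem_unitaryGroup (hGY : ∀ x, G x ∈ Y) (hGp : ∀ y ∈ Y, Periodic G y) {c : ℂ}
    (hc : IsPhase c) (w : Bitstring n) (H : Bitstring n → ZMod 2) :
    IsUnitaryGate (shearGate u G c w H) :=
  monomialMatrix_mem_unitaryGroup (shear_leftInverse hGY hGp) (shear_rightInverse hGY hGp)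
    fun x => by rw [star_mul', star_signChar, mul_mul_mul_comm, hc.star_mul_self,
      signChar_mul_self, one_mul]

/-- Conjugating a Pauli by a shear of degree `k` yields a shear of degree `k - 1` (a forward
difference), and a shear of degree `0` is a Pauli. -/
theorem shearGate_mem_cliffordHierarchy (k : ℕ) (hGY : ∀ x, G x ∈ Y)
    (hGp : ∀ y ∈ Y, Periodic G y) (hG : DegreeLE k G) {H : Bitstring n → ZMod 2}
    (hHp : ∀ y ∈ Y, Periodic H y) (hH : DegreeLE (k + 1) H) {c : ℂ} (hc : IsPhase c)
    (w : Bitstring n) : shearGate u G c w H ∈ CliffordHierarchy n (k + 1) := by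
  induction k generalizing u G H c w with
  | zero =>
    obtain ⟨φ, hφ⟩ := hH.exists_addMonoidHom
    obtain ⟨w₀, hw₀⟩ := φ.exists_eq_dotProduct
    refine mem_pauliGroup_iff.2 ⟨c * signChar (H 0), u + G 0, w + w₀, hc.mul_signChar _, ?_⟩
    rw [shearGate, pauli]
    congr 1 <;> funext x
    · rw [hG x 0, add_assoc]
    · simp only [hφ x, hw₀ x, add_dotProduct, AddChar.map_add_eq_mul]
      ring
  | succ k ih =>
    refine ⟨shearGate_mem_unitaryGroup hGY hGp hc w H, fun P hP => ?_⟩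
    obtain ⟨c', u', w', hc', rfl⟩ := mem_pauliGroup_iff.1 hP
    rw [shearGate_conj_pauli hGY hGp hHp hc]
    have hGp' (y : Bitstring n) (hy : y ∈ Y) : Periodic (fun x => Δ_[u'] G (x + u)) y :=
      (((hGp y hy).add_const u').sub (hGp y hy)).add_const u
    have hdot : DegreeLE (k + 1) (fun x => w' ⬝ᵥ G x) :=
      hG.map (AddMonoidHom.mk' (w' ⬝ᵥ ·) (dotProduct_add w'))
    refine ih (fun x => Y.sub_mem (hGY _) (hGY _)) hGp' ((hG u').comp_add_right u)
      (fun y hy => ?_) ?_ hc' w'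
    · exact ((((hHp y hy).add_const u').sub (hHp y hy)).add_const u |>.add
        (((hGp y hy).comp (w' ⬝ᵥ ·)).add_const u)).add fun _ => rfl
    · exact (((hH u').add hdot).comp_add_right u).add (degreeLE_const _ _)

end Shear

section PauliParameters

variable {n : ℕ}

lemma exists_linear_pauli_params {Q : Bitstring n → Gate n} (hQ : ∀ v, Q v ∈ PauliGroup n)
    (hmul : ∀ a b, Q (a + b) = Q a * Q b) :
    ∃ (c : Bitstring n → ℂ) (u w : Bitstring n →ₗ[ZMod 2] Bitstring n), (∀ v, IsPhase (c v)) ∧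
      (∀ v, Q v = pauli (c v) (u v) (w v)) ∧ ∀ a b, w a ⬝ᵥ u b = w b ⬝ᵥ u a := by
  choose c u w hc hcuw using fun v => mem_pauliGroup_iff.1 (hQ v)
  have hparams (a b : Bitstring n) :
      c (a + b) = c a * c b * signChar (w a ⬝ᵥ u b) ∧ u (a + b) = u a + u b ∧
        w (a + b) = w a + w b :=
    pauli_inj (hc _).ne_zero (by rw [← hcuw, hmul, hcuw, hcuw, pauli_mul])
  refine ⟨c, (AddMonoidHom.mk' u fun a b => (hparams a b).2.1).toZModLinearMap 2,
    (AddMonoidHom.mk' w fun a b => (hparams a b).2.2).toZModLinearMap 2, hc, hcuw, fun a b => ?_⟩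
  have h := (hparams a b).1.symm.trans ((add_comm a b ▸ hparams b a).1)
  rw [mul_comm (c b)] at h
  exact signChar_injective (mul_left_cancel₀ (mul_ne_zero (hc a).ne_zero (hc b).ne_zero) h)

lemma exists_pauli_params_of_mem_clifford {C : Gate n} (hC : C ∈ CliffordHierarchy n 2) :
    ∃ (c : Bitstring n → ℂ) (u w : Bitstring n →ₗ[ZMod 2] Bitstring n), (∀ v, IsPhase (c v)) ∧
      (∀ v, C * zGate v * Cᴴ = pauli (c v) (u v) (w v)) ∧
      (∀ a b, w a ⬝ᵥ u b = w b ⬝ᵥ u a) ∧ ∀ v, u v = 0 → w v = 0 → v = 0 := by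
  have hmul (a b : Bitstring n) :
      C * zGate (a + b) * Cᴴ = C * zGate a * Cᴴ * (C * zGate b * Cᴴ) := by
    simp only [zGate_add, Matrix.mul_assoc, ← Matrix.mul_assoc Cᴴ C, hC.1.conjTranspose_mul_self,
      Matrix.one_mul]
  obtain ⟨c, u, w, hc, hcuw, hsymm⟩ := exists_linear_pauli_params (Q := fun v => C * zGate v * Cᴴ)
    (fun v => hC.2 _ (pauli_mem_pauliGroup (.inl rfl) 0 v)) hmul
  refine ⟨c, u, w, hc, hcuw, hsymm, fun v hu hw => eq_zero_of_zGate_eq_smul_one (c := c v) ?_⟩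
  rw [← hC.1.conjTranspose_conj (zGate v), hcuw, hu, hw, pauli_zero_zero, Matrix.mul_smul,
    Matrix.mul_one, Matrix.smul_mul, hC.1.conjTranspose_mul_self]

end PauliParameters

section Permutation

variable {n : ℕ}

lemma permGate_eq_monomialMatrix (σ : Equiv.Perm (Bitstring n)) :
    permGate σ = monomialMatrix σ 1 :=
  rfl

lemma permGate_conj_pauli_eq {σ : Equiv.Perm (Bitstring n)} {c c' : ℂ} {u u' w w' : Bitstring n}
    (hc : c ≠ 0) (h : permGate σ * pauli c u w * (permGate σ)ᴴ = pauli c' u' w') :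
    (∀ x, σ (x + u) = σ x + u') ∧ ∀ x, w' ⬝ᵥ σ x = w ⬝ᵥ x + w' ⬝ᵥ σ 0 := by
  rw [permGate_eq_monomialMatrix, pauli,
    monomialMatrix_conj σ.leftInverse_symm σ.rightInverse_symm, pauli] at h
  have key (x : Bitstring n) := by
    simpa using apply_eq_and_eq_of_monomialMatrix_eq
      (fun b => by simpa using mul_ne_zero hc (signChar_ne_zero _)) h (σ x)
  refine ⟨fun x => (key x).1, fun x => signChar_injective ?_⟩
  have h0 := (key 0).2
  simp only [dotProduct_zero, AddChar.map_zero_eq_one, mul_one] at h0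
  have hx := (key x).2
  rw [h0, mul_assoc] at hx
  rw [AddChar.map_add_eq_mul, mul_comm]
  exact (mul_left_cancel₀ (left_ne_zero_of_mul (h0 ▸ hc)) hx).symm

end Permutation

section ShearDecomposition

open LinearMap Module

lemma exists_linearEquiv_comp_eq_of_injective {F V W : Type*} [Field F] [AddCommGroup V]
    [Module F V] [FiniteDimensional F V] [AddCommGroup W] [Module F W] {i f : W →ₗ[F] V}
    (hi : Injective i) (hf : Injective f) {q : V →ₗ[F] V ⧸ range f} (hq : Surjective q)
    (hiq : range i ≤ ker q) :
    ∃ B : V ≃ₗ[F] V, (∀ w, B (i w) = f w) ∧ ∀ x, (range f).mkQ (B x) = q x := by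
  have hker : ker q = range i := by
    refine (Submodule.eq_of_le_of_finrank_le hiq ?_).symm
    have h1 := q.finrank_range_add_finrank_ker
    have h2 := (range f).finrank_quotient_add_finrank
    rw [range_eq_top.2 hq, finrank_top] at h1
    rw [finrank_range_of_inj hf] at h2
    rw [finrank_range_of_inj hi]
    omega
  obtain ⟨r, hr⟩ := i.exists_leftInverse_of_injective (ker_eq_bot.2 hi)
  obtain ⟨s, hs⟩ := (range f).mkQ.exists_rightInverse_of_surjective (range f).range_mkQ
  set B₀ : V →ₗ[F] V := s ∘ₗ q + f ∘ₗ r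
  have hB₀i (w : W) : B₀ (i w) = f w := by
    have : q (i w) = 0 := hiq ⟨w, rfl⟩
    simp [B₀, this, ← comp_apply r i, hr]
  have hB₀q (x : V) : (range f).mkQ (B₀ x) = q x := by
    have h1 : (range f).mkQ (s (q x)) = q x := LinearMap.congr_fun hs (q x)
    have h2 : (range f).mkQ (f (r x)) = 0 :=
      (Submodule.Quotient.mk_eq_zero _).2 (mem_range_self f _)
    simp only [B₀, LinearMap.add_apply, LinearMap.comp_apply, map_add, h1, h2, add_zero]
  have hinj : Injective B₀ := by
    refine (injective_iff_map_eq_zero B₀).2 fun x hx => ?_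
    obtain ⟨w, rfl⟩ : x ∈ range i := hker ▸ (show q x = 0 by rw [← hB₀q, hx, map_zero])
    rw [hB₀i, map_eq_zero_iff f hf] at hx
    rw [hx, map_zero]
  exact ⟨LinearEquiv.ofInjectiveEndo B₀ hinj, hB₀i, hB₀q⟩

variable {n : ℕ}

/-- `u (ker w)` is orthogonal to `range w` by `hsymm`, and has the dimension of its orthogonal. -/
lemma mem_map_ker_of_forall_dotProduct_eq_zero {u w : Bitstring n →ₗ[ZMod 2] Bitstring n}
    (hsymm : ∀ a b, w a ⬝ᵥ u b = w b ⬝ᵥ u a) (hinj : ∀ v, u v = 0 → w v = 0 → v = 0)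
    {z : Bitstring n} (hz : ∀ v, w v ⬝ᵥ z = 0) : z ∈ (ker w).map u := by
  let β : LinearMap.BilinForm (ZMod 2) (Bitstring n) := dotProductBilin (ZMod 2) (ZMod 2)
  have hβ : β.Nondegenerate := ⟨fun x hx => dotProduct_eq_zero x hx,
    fun x hx => dotProduct_eq_zero x fun y => dotProduct_comm x y ▸ hx y⟩
  have hle : (ker w).map u ≤ β.orthogonal (range w) := by
    rintro _ ⟨v, hv, rfl⟩ _ ⟨v', rfl⟩
    change w v' ⬝ᵥ u v = 0
    rw [hsymm, mem_ker.1 hv, zero_dotProduct]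
  have hdim : finrank (ZMod 2) ((ker w).map u) = finrank (ZMod 2) (ker w) := by
    rw [← range_domRestrict, finrank_range_of_inj]
    refine (injective_iff_map_eq_zero _).2 fun ⟨v, hv⟩ h => ?_
    exact Subtype.ext (hinj v h (mem_ker.1 hv))
  have heq := Submodule.eq_of_le_of_finrank_le hle (by
    rw [LinearMap.BilinForm.finrank_orthogonal hβ, hdim]
    have := w.finrank_range_add_finrank_ker
    omega)
  exact heq ▸ fun _ ⟨v, hv⟩ => hv ▸ hz v

theorem exists_affine_shear_decomposition {V W : Type*} [AddCommGroup V] [Module (ZMod 2) V]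
    [FiniteDimensional (ZMod 2) V] [AddCommGroup W] [Module (ZMod 2) W] {σ : Equiv.Perm V}
    {i f : W →ₗ[ZMod 2] V} (hi : Injective i) (hf : Injective f)
    (htransl : ∀ w x, σ (x + i w) = σ x + f w)
    (hcocycle : ∀ x y, σ (x + y) - σ x - σ y + σ 0 ∈ range f) :
    ∃ (B : V ≃ₗ[ZMod 2] V) (U : Submodule (ZMod 2) V) (g : V → V),
      (∀ x, g x ∈ U) ∧ (∀ y ∈ U, Periodic g y) ∧ ∀ x, σ x = B (x + g x) + σ 0 := by
  let q : V →ₗ[ZMod 2] V ⧸ range f :=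
    (AddMonoidHom.mk' (fun x => (range f).mkQ (σ x - σ 0)) fun x y => by
      rw [← map_add, Submodule.mkQ_apply, Submodule.mkQ_apply, Submodule.Quotient.eq]
      convert hcocycle x y using 1
      abel).toZModLinearMap 2
  have hq : Surjective q := fun z => by
    obtain ⟨y, rfl⟩ := Submodule.mkQ_surjective _ z
    exact ⟨σ.symm (y + σ 0), by simp [q]⟩
  have hiq : range i ≤ ker q := by
    rintro _ ⟨w, rfl⟩
    have h := htransl w 0
    rw [zero_add] at h
    simp [q, h]
  obtain ⟨B, hBi, hBq⟩ := exists_linearEquiv_comp_eq_of_injective hi hf hq hiq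
  have hBsymm (w : W) : B.symm (f w) = i w := B.symm_apply_eq.2 (hBi w).symm
  refine ⟨B, range i, fun x => B.symm (σ x - σ 0) - x, fun x => ?_, ?_, fun x => by simp⟩
  · obtain ⟨w, hw⟩ : σ x - σ 0 - B x ∈ range f := (Submodule.Quotient.eq _).1 (hBq x).symm
    refine ⟨w, ?_⟩
    rw [← hBsymm, hw, map_sub, LinearEquiv.symm_apply_apply]
  · rintro _ ⟨w, rfl⟩ x
    simp only [htransl, add_sub_right_comm, map_add, hBsymm]
    abel

theorem exists_affine_shear_decomposition_of_lagrangian {σ : Equiv.Perm (Bitstring n)}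
    {uQ wQ uR wR : Bitstring n →ₗ[ZMod 2] Bitstring n}
    (htransl : ∀ v x, σ (x + uQ v) = σ x + uR v)
    (hphase : ∀ v x, wR v ⬝ᵥ σ x = wQ v ⬝ᵥ x + wR v ⬝ᵥ σ 0)
    (hQ : ∀ v, uQ v = 0 → wQ v = 0 → v = 0) (hR : ∀ v, uR v = 0 → wR v = 0 → v = 0)
    (hsymm : ∀ a b, wR a ⬝ᵥ uR b = wR b ⬝ᵥ uR a) :
    ∃ (B : Bitstring n ≃ₗ[ZMod 2] Bitstring n) (U : Submodule (ZMod 2) (Bitstring n))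
      (g : Bitstring n → Bitstring n),
      (∀ x, g x ∈ U) ∧ (∀ y ∈ U, Periodic g y) ∧ ∀ x, σ x = B (x + g x) + σ 0 := by
  refine exists_affine_shear_decomposition (i := uQ.domRestrict (ker wR))
    (f := uR.domRestrict (ker wR)) ?_ ?_ (fun w x => htransl w x) fun x y => ?_
  · refine (injective_iff_map_eq_zero _).2 fun ⟨v, hv⟩ h => Subtype.ext (hQ v h ?_)
    refine dotProduct_eq_zero _ fun x => ?_
    simpa [mem_ker.1 hv] using (hphase v x).symm
  · exact (injective_iff_map_eq_zero _).2 fun ⟨v, hv⟩ h => Subtype.ext (hR v h (mem_ker.1 hv))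
  · -- `hphase` makes `σ` affine modulo `(range wR)ᗮ = uR (ker wR)`
    rw [range_domRestrict]
    refine mem_map_ker_of_forall_dotProduct_eq_zero hsymm hR fun v => ?_
    rw [dotProduct_add, dotProduct_sub, dotProduct_sub, hphase v (x + y), hphase v x, hphase v y,
      dotProduct_add]
    ring

end ShearDecomposition

section Assembly

variable {n : ℕ}

lemma semiClifford_conj_zGate {φ₁ d φ₂ : Gate n} (hφ₂ : IsUnitaryGate φ₂)
    (hd : IsDiagonalGate d) (v : Bitstring n) :
    (φ₁ * d * φ₂) * (φ₂ᴴ * zGate v * φ₂) * (φ₁ * d * φ₂)ᴴ = φ₁ * zGate v * φ₁ᴴ :=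
  calc (φ₁ * d * φ₂) * (φ₂ᴴ * zGate v * φ₂) * (φ₁ * d * φ₂)ᴴ
      = φ₁ * (d * (φ₂ * φ₂ᴴ) * zGate v * (φ₂ * φ₂ᴴ) * dᴴ) * φ₁ᴴ := by
        simp only [conjTranspose_mul, Matrix.mul_assoc]
    _ = φ₁ * (zGate v * (d * dᴴ)) * φ₁ᴴ := by
        rw [hφ₂.mul_conjTranspose_self, Matrix.mul_one, Matrix.mul_one,
          (commute_zGate_of_isDiag hd.2 v).eq]
        simp only [Matrix.mul_assoc]
    _ = φ₁ * zGate v * φ₁ᴴ := by rw [hd.1.mul_conjTranspose_self, Matrix.mul_one]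

theorem IsSemiClifford.exists_affine_shear_decomposition {σ : Equiv.Perm (Bitstring n)}
    (h : IsSemiClifford (permGate σ)) :
    ∃ (B : Bitstring n ≃ₗ[ZMod 2] Bitstring n) (U : Submodule (ZMod 2) (Bitstring n))
      (g : Bitstring n → Bitstring n),
      (∀ x, g x ∈ U) ∧ (∀ y ∈ U, Periodic g y) ∧ ∀ x, σ x = B (x + g x) + σ 0 := by
  obtain ⟨φ₁, d, φ₂, hφ₁, hφ₂, hd, hσ⟩ := h
  obtain ⟨cQ, uQ, wQ, hcQ, hQ, -, hQinj⟩ :=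
    exists_pauli_params_of_mem_clifford (CliffordHierarchy.conjTranspose_mem_two hφ₂)
  obtain ⟨cR, uR, wR, -, hR, hsymm, hRinj⟩ := exists_pauli_params_of_mem_clifford hφ₁
  have hconj (v : Bitstring n) :
      permGate σ * pauli (cQ v) (uQ v) (wQ v) * (permGate σ)ᴴ = pauli (cR v) (uR v) (wR v) := by
    rw [← hQ, ← hR, conjTranspose_conjTranspose, hσ]
    exact semiClifford_conj_zGate hφ₂.1 hd v
  have hσQR (v : Bitstring n) := permGate_conj_pauli_eq (hcQ v).ne_zero (hconj v)
  exact exists_affine_shear_decomposition_of_lagrangian (fun v => (hσQR v).1)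
    (fun v => (hσQR v).2) hQinj hRinj hsymm

lemma affineGate_mem_cliffordHierarchy_two (B : Bitstring n ≃ₗ[ZMod 2] Bitstring n)
    (b : Bitstring n) : monomialMatrix (fun x => B x + b) 1 ∈ CliffordHierarchy n 2 := by
  have hgf : LeftInverse (fun y => B.symm (y - b)) (fun x => B x + b) := fun x => by simp
  have hfg : RightInverse (fun y => B.symm (y - b)) (fun x => B x + b) := fun y => by simp
  refine ⟨monomialMatrix_mem_unitaryGroup hgf hfg fun _ => by simp, fun P hP => ?_⟩
  obtain ⟨c, u, w, hc, rfl⟩ := mem_pauliGroup_iff.1 hP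
  obtain ⟨w', hw'⟩ : ∃ w' : Bitstring n, ∀ x, w ⬝ᵥ B.symm x = w' ⬝ᵥ x :=
    ((AddMonoidHom.mk' (w ⬝ᵥ ·) (dotProduct_add w)).comp
      B.symm.toLinearMap.toAddMonoidHom).exists_eq_dotProduct
  refine mem_pauliGroup_iff.2 ⟨c * signChar (w' ⬝ᵥ b), B u, w', hc.mul_signChar _, ?_⟩
  rw [pauli, monomialMatrix_conj hgf hfg, pauli]
  congr 1 <;> funext y
  · simp only [Function.comp_apply, map_add, LinearEquiv.apply_symm_apply]
    abel
  · simp only [Pi.one_apply, one_mul, star_one, mul_one, hw', ZModModule.sub_eq_add,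
      dotProduct_add, AddChar.map_add_eq_mul]
    ring

lemma shear_mem_cliffordHierarchy {k : ℕ} (hk : k ≠ 0) {U : Submodule (ZMod 2) (Bitstring k)}
    {g : Bitstring k → Bitstring k} (hgU : ∀ x, g x ∈ U) (hgp : ∀ y ∈ U, Periodic g y) :
    monomialMatrix (fun x => x + g x) 1 ∈ CliffordHierarchy k k := by
  obtain ⟨m, rfl⟩ := Nat.exists_eq_succ_of_ne_zero hk
  have hg : DegreeLE m g := by
    simpa using degreeLE_pred_finrank_of_periodic hgU hgp
  convert shearGate_mem_cliffordHierarchy (u := 0) m hgU hgp hg (fun _ _ _ => rfl)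
    (degreeLE_const _ 0) (.inl rfl) 0 using 1
  simp only [shearGate, add_zero, zero_dotProduct, AddChar.map_zero_eq_one, mul_one]
  rfl

lemma permGate_mem_pauliGroup_of_le_one (hn : n ≤ 1) (σ : Equiv.Perm (Bitstring n)) :
    permGate σ ∈ PauliGroup n := by
  have hnonzero : ∀ a b : Bitstring n, a ≠ 0 → b ≠ 0 → a = b := by
    interval_cases n <;> decide
  refine mem_pauliGroup_iff.2 ⟨1, σ 0, 0, .inl rfl, ?_⟩
  rw [permGate_eq_monomialMatrix, pauli]
  congr 1 <;> funext x
  · by_cases hx : x = 0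
    · simp [hx]
    · exact sub_eq_iff_eq_add.1 (hnonzero _ _ (sub_ne_zero.2 (σ.injective.ne hx)) hx)
  · simp

end Assembly

theorem semiClifford_perm_mem_level_n_general (n : ℕ)
    (π : Gate n) (hπ : IsPermGate π) (hsc : IsSemiClifford π) :
    π ∈ CliffordHierarchy n n := by
  obtain ⟨σ, rfl⟩ := hπ
  rcases Nat.lt_or_ge n 2 with hn | hn
  · interval_cases n <;> exact permGate_mem_pauliGroup_of_le_one (by omega) σ
  obtain ⟨B, U, g, hgU, hgp, hσ⟩ := hsc.exists_affine_shear_decomposition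
  have hdecomp : permGate σ = monomialMatrix (fun x => B x + σ 0) 1 *
      monomialMatrix (fun x => x + g x) 1 := by
    rw [permGate_eq_monomialMatrix, monomialMatrix_mul]
    congr 1 <;> funext x
    · exact hσ x
    · simp
  obtain ⟨k, rfl⟩ : ∃ k, n = k + 2 := ⟨n - 2, by omega⟩
  rw [hdecomp]
  exact CliffordHierarchy.mul_mem (affineGate_mem_cliffordHierarchy_two B (σ 0))
    (shear_mem_cliffordHierarchy (by omega) hgU hgp)

/-- Every semi-Clifford permutation gate on `n` qubits lies in `𝒞ₙ`. -/
theorem semiClifford_perm_mem_level_n (n : ℕ) (hn : 1 ≤ n)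
    (π : Gate n) (hπ : IsPermGate π) (hsc : IsSemiClifford π) :
    π ∈ CliffordHierarchy n n :=
  semiClifford_perm_mem_level_n_general n π hπ hsc
end

section
/- Any mismatch-free product of C*X gates is semi-Clifford. -/
open Matrix

/-- Action of a `C*X` gate with control set `S` and target `t` on a bitstring. -/
def cxFun {n : ℕ} (S : Finset (Fin n)) (t : Fin n) (a : Fin n → ZMod 2) :
    Fin n → ZMod 2 :=
  Function.update a t (a t + ∏ i ∈ S, a i)

/-- The `C*X` gate with control set `S` and target `t`. -/
def cxGate {n : ℕ} (S : Finset (Fin n)) (t : Fin n) : Gate n :=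
  Matrix.of fun a b => if a = cxFun S t b then 1 else 0

/-- `μ` is the product of the `C*X` gates recorded in the list `l`
(each entry: control set and target, with the target not a control of the same gate). -/
def IsCXProduct {n : ℕ} (l : List (Finset (Fin n) × Fin n)) (μ : Gate n) : Prop :=
  (∀ g ∈ l, g.2 ∉ g.1) ∧ μ = (l.map fun g => cxGate g.1 g.2).prod

/-- A product of `C*X` gates is mismatch-free if no qubit occurs both as a target
of some gate and as a control of some gate. -/
def MismatchFree {n : ℕ} (l : List (Finset (Fin n) × Fin n)) : Prop :=
  ∀ g ∈ l, ∀ g' ∈ l, g.2 ∉ g'.1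

/-!
Let `T` be the set of all targets. Since no target is a control, a `C*X` gate with controls `S`
and target `t` equals `H_T · CZ_{S ∪ {t}} · H_T`, where `H_T` applies the Hadamard gate to every
qubit of `T` and `CZ_{S ∪ {t}}` is the diagonal gate `|a⟩ ↦ (-1)^(∏_{i ∈ S ∪ {t}} a i) |a⟩`:
the Hadamard on `t` turns the `X` on `t` into a `Z`, and the Hadamards on `T \ {t}` commute with
`CZ_{S ∪ {t}}`, which touches no qubit of `T` other than `t`. As `H_T² = 1`, the whole product
is `H_T · (∏ CZ) · H_T`, and `H_T` is Clifford because conjugation by a Hadamard swaps `X` and `Z`.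
-/

lemma ZMod.two_eq_zero_or_one (x : ZMod 2) : x = 0 ∨ x = 1 := by
  revert x; decide

lemma ZMod.sum_univ_two {M : Type*} [AddCommMonoid M] (f : ZMod 2 → M) :
    ∑ x, f x = f 0 + f 1 :=
  Fin.sum_univ_two f

noncomputable def sign2 : AddChar (ZMod 2) ℂ where
  toFun x := (-1) ^ x.val
  map_zero_eq_one' := by simp
  map_add_eq_mul' x y := by rw [ZMod.val_add, ← neg_one_pow_eq_pow_mod_two, pow_add]

@[simp] lemma sign2_one : sign2 1 = -1 := by simp [sign2, ZMod.val_one]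

@[simp] lemma star_sign2 (x : ZMod 2) : star (sign2 x) = sign2 x := by
  rcases x.two_eq_zero_or_one with rfl | rfl <;> simp

lemma sign2_mul_self (x : ZMod 2) : sign2 x * sign2 x = 1 := by
  rw [← AddChar.map_add_eq_mul, CharTwo.add_self_eq_zero, AddChar.map_zero_eq_one]

lemma sign2_sum {ι : Type*} (s : Finset ι) (x : ι → ZMod 2) :
    sign2 (∑ i ∈ s, x i) = ∏ i ∈ s, sign2 (x i) := by
  induction s using Finset.cons_induction with
  | empty => simp
  | cons a s ha ih => rw [Finset.sum_cons, Finset.prod_cons, AddChar.map_add_eq_mul, ih]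

lemma inv_sqrt_two_mul_self : (√2 : ℂ)⁻¹ * (√2 : ℂ)⁻¹ = 2⁻¹ := by
  rw [← mul_inv, ← Complex.ofReal_mul, Real.mul_self_sqrt zero_le_two]
  norm_num

/-- The single-qubit Pauli matrix `X^u Z^v`. -/
noncomputable def qubitPauli (u v : ZMod 2) : Matrix (ZMod 2) (ZMod 2) ℂ :=
  of fun x y => if x = y + u then sign2 (v * y) else 0

noncomputable def qubitHadamard : Matrix (ZMod 2) (ZMod 2) ℂ :=
  (√2 : ℂ)⁻¹ • of fun x y => sign2 (x * y)

lemma qubitPauli_zero_left (v : ZMod 2) :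
    qubitPauli 0 v = diagonal fun y => sign2 (v * y) := by
  ext x y
  by_cases h : x = y <;> simp [qubitPauli, h]

lemma qubitHadamard_conjTranspose : qubitHadamardᴴ = qubitHadamard := by
  ext x y
  rcases x.two_eq_zero_or_one with rfl | rfl <;>
    rcases y.two_eq_zero_or_one with rfl | rfl <;> simp [qubitHadamard]

lemma qubitHadamard_mul_self : qubitHadamard * qubitHadamard = 1 := by
  ext x y
  rcases x.two_eq_zero_or_one with rfl | rfl <;>
    rcases y.two_eq_zero_or_one with rfl | rfl <;>
    simp [qubitHadamard, mul_apply, ZMod.sum_univ_two, inv_sqrt_two_mul_self]; norm_num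

lemma qubitHadamard_mul_qubitPauli_mul_qubitHadamard (u v : ZMod 2) :
    qubitHadamard * qubitPauli u v * qubitHadamard = sign2 (u * v) • qubitPauli v u := by
  ext x y
  rcases u.two_eq_zero_or_one with rfl | rfl <;> rcases v.two_eq_zero_or_one with rfl | rfl <;>
    rcases x.two_eq_zero_or_one with rfl | rfl <;> rcases y.two_eq_zero_or_one with rfl | rfl <;>
    simp [qubitHadamard, qubitPauli, mul_apply, ZMod.sum_univ_two, inv_sqrt_two_mul_self,
      CharTwo.add_self_eq_zero] <;>
    norm_num

namespace Matrix

variable {ι κ R : Type*} [Fintype ι]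

def piKron [CommSemiring R] (f : ι → Matrix κ κ R) : Matrix (ι → κ) (ι → κ) R :=
  of fun a b => ∏ i, f i (a i) (b i)

section CommSemiring

variable [CommSemiring R]

lemma piKron_apply (f : ι → Matrix κ κ R) (a b : ι → κ) :
    piKron f a b = ∏ i, f i (a i) (b i) := rfl

lemma piKron_mul [DecidableEq ι] [Fintype κ] (f g : ι → Matrix κ κ R) :
    piKron f * piKron g = piKron (f * g) := by
  ext a c
  simp only [mul_apply, piKron_apply, Pi.mul_apply, Finset.prod_univ_sum]
  exact Finset.sum_congr rfl fun b _ => Finset.prod_mul_distrib.symm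

lemma piKron_one [DecidableEq κ] : piKron (1 : ι → Matrix κ κ R) = 1 := by
  ext a b
  simp only [piKron_apply, Pi.one_apply, one_apply, Fintype.prod_boole, funext_iff]

lemma piKron_smul (c : ι → R) (f : ι → Matrix κ κ R) :
    piKron (fun i => c i • f i) = (∏ i, c i) • piKron f := by
  ext a b
  simp only [piKron_apply, smul_apply, smul_eq_mul, Finset.prod_mul_distrib]

lemma piKron_conjTranspose [StarRing R] (f : ι → Matrix κ κ R) :
    (piKron f)ᴴ = piKron fun i => (f i)ᴴ := by
  ext a b
  simp only [conjTranspose_apply, piKron_apply, star_prod]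

lemma piKron_mulSingle_apply [DecidableEq ι] [DecidableEq κ] (t : ι) (A : Matrix κ κ R)
    (a b : ι → κ) :
    piKron (Pi.mulSingle t A) a b = if ∀ i ≠ t, a i = b i then A (a t) (b t) else 0 := by
  rw [piKron_apply, ← Finset.mul_prod_erase _ _ (Finset.mem_univ t), Pi.mulSingle_eq_same]
  have hrest : ∏ i ∈ Finset.univ.erase t, (Pi.mulSingle t A : ι → Matrix κ κ R) i (a i) (b i)
      = ∏ i ∈ Finset.univ.erase t, if a i = b i then 1 else 0 :=
    Finset.prod_congr rfl fun i hi => by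
      rw [Pi.mulSingle_eq_of_ne (Finset.ne_of_mem_erase hi), one_apply]
  rw [hrest, Finset.prod_boole]
  simp only [Finset.mem_erase, Finset.mem_univ, and_true, mul_ite, mul_one, mul_zero]

lemma piKron_mulSingle_mul_diagonal_mul_apply [DecidableEq ι] [Fintype κ] [DecidableEq κ]
    (t : ι) (A B : Matrix κ κ R) (d : (ι → κ) → R) (a c : ι → κ) :
    (piKron (Pi.mulSingle t A) * diagonal d * piKron (Pi.mulSingle t B)) a c =
      if ∀ i ≠ t, a i = c i then
        (A * diagonal (fun x => d (Function.update a t x)) * B) (a t) (c t)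
      else 0 := by
  rw [mul_apply, mul_apply]
  simp only [mul_diagonal, piKron_mulSingle_apply]
  have hvanish : ∀ b ∈ Finset.univ, b ∉ Finset.univ.image (Function.update a t) →
      (if ∀ i ≠ t, a i = b i then A (a t) (b t) else 0) * d b *
        (if ∀ i ≠ t, b i = c i then B (b t) (c t) else 0) = 0 := by
    intro b _ hb
    rw [if_neg, zero_mul, zero_mul]
    refine fun hab => hb (Finset.mem_image.mpr ⟨b t, Finset.mem_univ _, ?_⟩)
    exact (Function.eq_update_iff.mpr ⟨rfl, fun i hi => (hab i hi).symm⟩).symm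
  rw [← Finset.sum_subset (Finset.subset_univ _) hvanish,
    Finset.sum_image fun x _ y _ => (Function.update_injective a t ·)]
  split_ifs with hac
  · refine Finset.sum_congr rfl fun x _ => ?_
    have hupd : ∀ i ≠ t, Function.update a t x i = c i := fun i hi => by
      rw [Function.update_of_ne hi, hac i hi]
    rw [if_pos fun i hi => (Function.update_of_ne hi x a).symm, if_pos hupd,
      Function.update_self]
  · refine Finset.sum_eq_zero fun x _ => ?_
    refine mul_eq_zero_of_right _ (if_neg fun hupd => hac fun i hi => ?_)
    rw [← hupd i hi, Function.update_of_ne hi]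

end CommSemiring

end Matrix

lemma List.prod_map_conj_of_mul_self_eq_one {α M : Type*} [Monoid M] {h : M} (hh : h * h = 1)
    (l : List α) (f : α → M) : (l.map fun x => h * f x * h).prod = h * (l.map f).prod * h := by
  induction l with
  | nil => simp [hh]
  | cons x l ih =>
    simp only [List.map_cons, List.prod_cons, ih]
    rw [show h * f x * h * (h * (l.map f).prod * h) = h * f x * (h * h) * (l.map f).prod * h by
      simp only [mul_assoc], hh, mul_one]
    simp only [mul_assoc]

section Gates

variable {n : ℕ}

noncomputable def hadamardOn (W : Finset (Fin n)) : Gate n :=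
  piKron fun i => if i ∈ W then qubitHadamard else 1

noncomputable def czGate (S : Finset (Fin n)) : Gate n :=
  diagonal fun a => sign2 (∏ i ∈ S, a i)

lemma hadamardOn_conjTranspose (W : Finset (Fin n)) : (hadamardOn W)ᴴ = hadamardOn W := by
  rw [hadamardOn, piKron_conjTranspose]
  congr 1
  funext i
  split_ifs
  exacts [qubitHadamard_conjTranspose, conjTranspose_one]

lemma hadamardOn_mul_self (W : Finset (Fin n)) : hadamardOn W * hadamardOn W = 1 := by
  rw [hadamardOn, piKron_mul, ← piKron_one]
  congr 1
  funext i
  simp only [Pi.mul_apply, Pi.one_apply]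
  split_ifs
  exacts [qubitHadamard_mul_self, one_mul 1]

lemma hadamardOn_mul_hadamardOn {W₁ W₂ : Finset (Fin n)} (h : Disjoint W₁ W₂) :
    hadamardOn W₁ * hadamardOn W₂ = hadamardOn (W₁ ∪ W₂) := by
  rw [hadamardOn, hadamardOn, hadamardOn, piKron_mul]
  congr 1
  funext i
  by_cases h₁ : i ∈ W₁ <;> by_cases h₂ : i ∈ W₂
  · exact absurd h₂ (Finset.disjoint_left.mp h h₁)
  all_goals simp [h₁, h₂]

lemma hadamardOn_singleton (t : Fin n) :
    hadamardOn {t} = piKron (Pi.mulSingle t qubitHadamard) := by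
  rw [hadamardOn]
  congr 1
  funext i
  simp [Pi.mulSingle_apply]

lemma hadamardOn_apply_eq_zero {W : Finset (Fin n)} {a b : Fin n → ZMod 2} {i : Fin n}
    (hi : i ∉ W) (hab : a i ≠ b i) : hadamardOn W a b = 0 :=
  Finset.prod_eq_zero (Finset.mem_univ i) (by simp [hi, one_apply, hab])

lemma isUnitaryGate_hadamardOn (W : Finset (Fin n)) : IsUnitaryGate (hadamardOn W) := by
  rw [IsUnitaryGate, mem_unitaryGroup_iff, star_eq_conjTranspose, hadamardOn_conjTranspose,
    hadamardOn_mul_self]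

lemma mem_pauliGroup_iff_s9 {P : Gate n} :
    P ∈ PauliGroup n ↔ ∃ (c : ℂ) (u v : Fin n → ZMod 2),
      (c = 1 ∨ c = -1 ∨ c = Complex.I ∨ c = -Complex.I) ∧
        P = c • piKron fun i => qubitPauli (u i) (v i) := by
  have hP : ∀ (c : ℂ) (u v : Fin n → ZMod 2),
      (of fun a b => if a = b + u then c * (-1 : ℂ) ^ (∑ i, (v i * b i).val) else 0) =
        c • piKron fun i => qubitPauli (u i) (v i) := by
    intro c u v
    ext a b
    simp only [of_apply, Matrix.smul_apply, smul_eq_mul, piKron_apply, qubitPauli,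
      Fintype.prod_ite_zero, funext_iff, Pi.add_apply, ← Finset.prod_pow_eq_pow_sum]
    split_ifs <;> simp [sign2]
  simp only [PauliGroup, Set.mem_ofPred_eq, hP]

lemma phase_mul_sign2 {c : ℂ} (hc : c = 1 ∨ c = -1 ∨ c = Complex.I ∨ c = -Complex.I)
    (x : ZMod 2) :
    c * sign2 x = 1 ∨ c * sign2 x = -1 ∨ c * sign2 x = Complex.I ∨ c * sign2 x = -Complex.I := by
  rcases x.two_eq_zero_or_one with rfl | rfl
  · simpa using hc
  · rcases hc with rfl | rfl | rfl | rfl <;> simp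

lemma hadamardOn_mem_cliffordHierarchy_two (W : Finset (Fin n)) :
    hadamardOn W ∈ CliffordHierarchy n 2 := by
  refine ⟨isUnitaryGate_hadamardOn W, fun P hP => ?_⟩
  obtain ⟨c, u, v, hc, rfl⟩ := mem_pauliGroup_iff_s9.mp hP
  have hconj : ∀ i, (if i ∈ W then qubitHadamard else 1) * qubitPauli (u i) (v i) *
      (if i ∈ W then qubitHadamard else 1) =
        sign2 (if i ∈ W then u i * v i else 0) •
          qubitPauli (if i ∈ W then v i else u i) (if i ∈ W then u i else v i) := by
    intro i
    split_ifs
    · exact qubitHadamard_mul_qubitPauli_mul_qubitHadamard _ _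
    · simp
  rw [hadamardOn_conjTranspose, Matrix.mul_smul, Matrix.smul_mul, hadamardOn, piKron_mul,
    piKron_mul]
  simp only [Pi.mul_def, hconj]
  rw [piKron_smul, smul_smul, ← sign2_sum]
  exact mem_pauliGroup_iff_s9.mpr ⟨_, _, _, phase_mul_sign2 hc _, rfl⟩

lemma commute_diagonal_hadamardOn {d : (Fin n → ZMod 2) → ℂ} {W : Finset (Fin n)}
    (hd : ∀ a b, (∀ i ∉ W, a i = b i) → d a = d b) : Commute (diagonal d) (hadamardOn W) := by
  ext a b
  rw [diagonal_mul, mul_diagonal]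
  by_cases hab : ∀ i ∉ W, a i = b i
  · rw [hd a b hab, mul_comm]
  · push Not at hab
    obtain ⟨i, hi, hne⟩ := hab
    rw [hadamardOn_apply_eq_zero hi hne, mul_zero, zero_mul]

lemma cxGate_eq_hadamardOn_singleton_conj {S : Finset (Fin n)} {t : Fin n} (ht : t ∉ S) :
    cxGate S t = hadamardOn {t} * czGate (insert t S) * hadamardOn {t} := by
  ext a c
  rw [hadamardOn_singleton, czGate, piKron_mulSingle_mul_diagonal_mul_apply]
  split_ifs with hac
  · have hprod : ∀ x, ∏ i ∈ insert t S, Function.update a t x i = (∏ i ∈ S, c i) * x := by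
      intro x
      rw [Finset.prod_insert ht, Function.update_self, mul_comm]
      congr 1
      refine Finset.prod_congr rfl fun i hi => ?_
      have hit : i ≠ t := ne_of_mem_of_not_mem hi ht
      rw [Function.update_of_ne hit, hac i hit]
    -- along qubit `t` the middle factor is `Z^p` with `p = ∏ i ∈ S, c i`, and `H Z^p H = X^p`
    simp only [hprod, ← qubitPauli_zero_left, qubitHadamard_mul_qubitPauli_mul_qubitHadamard,
      zero_mul, AddChar.map_zero_eq_one, one_smul]
    simp only [cxGate, cxFun, qubitPauli, of_apply, Function.eq_update_iff, zero_mul,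
      AddChar.map_zero_eq_one]
    congr 1
    exact propext ⟨fun h => h.1, fun h => ⟨h, hac⟩⟩
  · rw [cxGate, of_apply, if_neg]
    intro h
    exact hac fun i hi => by rw [h, cxFun, Function.update_of_ne hi]

lemma cxGate_eq_hadamardOn_conj {S T : Finset (Fin n)} {t : Fin n} (ht : t ∉ S) (htT : t ∈ T)
    (hTS : Disjoint T S) :
    cxGate S t = hadamardOn T * czGate (insert t S) * hadamardOn T := by
  have hdisj : Disjoint {t} (T.erase t) := Finset.disjoint_singleton_left.mpr (T.notMem_erase t)
  have hT : {t} ∪ T.erase t = T := by rw [← Finset.insert_eq, Finset.insert_erase htT]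
  have hcomm : Commute (czGate (insert t S)) (hadamardOn (T.erase t)) := by
    refine commute_diagonal_hadamardOn fun a b hab => ?_
    congr 1
    refine Finset.prod_congr rfl fun i hi => hab i fun hiT => ?_
    rcases Finset.mem_insert.mp hi with rfl | hiS
    · exact T.notMem_erase i hiT
    · exact Finset.disjoint_left.mp hTS (Finset.mem_of_mem_erase hiT) hiS
  calc cxGate S t
      = hadamardOn {t} * czGate (insert t S) * hadamardOn {t} :=
        cxGate_eq_hadamardOn_singleton_conj ht
    _ = hadamardOn {t} *
          (hadamardOn (T.erase t) * czGate (insert t S) * hadamardOn (T.erase t)) *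
          hadamardOn {t} := by
        rw [← hcomm.eq, mul_assoc (czGate _), hadamardOn_mul_self, mul_one]
    _ = hadamardOn {t} * hadamardOn (T.erase t) * czGate (insert t S) *
          (hadamardOn (T.erase t) * hadamardOn {t}) := by
        simp only [mul_assoc]
    _ = hadamardOn T * czGate (insert t S) * hadamardOn T := by
        rw [hadamardOn_mul_hadamardOn hdisj, hadamardOn_mul_hadamardOn hdisj.symm,
          Finset.union_comm (T.erase t), hT]

lemma isDiagonalGate_one : IsDiagonalGate (1 : Gate n) :=
  ⟨one_mem _, fun _ _ h => one_apply_ne h⟩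

lemma IsDiagonalGate.mul {d₁ d₂ : Gate n} (h₁ : IsDiagonalGate d₁) (h₂ : IsDiagonalGate d₂) :
    IsDiagonalGate (d₁ * d₂) := by
  refine ⟨mul_mem h₁.1 h₂.1, fun a b hab => Finset.sum_eq_zero fun c _ => ?_⟩
  show d₁ a c * d₂ c b = 0
  by_cases hac : a = c
  · rw [← hac, h₂.2 a b hab, mul_zero]
  · rw [h₁.2 a c hac, zero_mul]

lemma isDiagonalGate_czGate (S : Finset (Fin n)) : IsDiagonalGate (czGate S) := by
  refine ⟨?_, fun _ _ hab => diagonal_apply_ne _ hab⟩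
  rw [IsUnitaryGate, mem_unitaryGroup_iff, star_eq_conjTranspose, czGate, diagonal_conjTranspose,
    diagonal_mul_diagonal, ← diagonal_one]
  congr 1
  funext a
  simp only [Pi.star_apply, star_sign2, sign2_mul_self]

end Gates

theorem mismatchFree_isSemiClifford_general (n : ℕ) (μ : Gate n)
    (l : List (Finset (Fin n) × Fin n)) (hl : IsCXProduct l μ) (hmf : MismatchFree l) :
    IsSemiClifford μ := by
  obtain ⟨hdisj, rfl⟩ := hl
  set T := (l.map Prod.snd).toFinset
  have hT : ∀ g ∈ l, Disjoint T g.1 := fun g hg =>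
    Finset.disjoint_left.mpr fun i hi => by
      obtain ⟨g', hg', rfl⟩ := List.mem_map.mp (List.mem_toFinset.mp hi)
      exact hmf g' hg' g hg
  have hconj : ∀ g ∈ l,
      cxGate g.1 g.2 = hadamardOn T * czGate (insert g.2 g.1) * hadamardOn T := fun g hg =>
    cxGate_eq_hadamardOn_conj (hdisj g hg) (List.mem_toFinset.mpr (List.mem_map_of_mem hg))
      (hT g hg)
  refine ⟨hadamardOn T, (l.map fun g => czGate (insert g.2 g.1)).prod, hadamardOn T,
    hadamardOn_mem_cliffordHierarchy_two T, hadamardOn_mem_cliffordHierarchy_two T, ?_, ?_⟩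
  · exact List.prod_induction _ (fun _ _ => IsDiagonalGate.mul) isDiagonalGate_one
      (List.forall_mem_map.mpr fun _ _ => isDiagonalGate_czGate _)
  · rw [List.map_congr_left hconj, List.prod_map_conj_of_mul_self_eq_one (hadamardOn_mul_self T)]

/-- Any mismatch-free product of `C*X` gates is semi-Clifford. -/
theorem mismatchFree_isSemiClifford (n : ℕ) (hn : 1 ≤ n) (μ : Gate n)
    (l : List (Finset (Fin n) × Fin n)) (hl : IsCXProduct l μ) (hmf : MismatchFree l) :
    IsSemiClifford μ :=
  mismatchFree_isSemiClifford_general n μ l hl hmf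
end

section
/- For any positive integer k, if π is an n-qubit permutation gate lying in 𝒞_{k+1}, with underlying permutation σ of 𝔽₂ⁿ, then every coordinate of σ⁻¹ has degree at most k as a polynomial over 𝔽₂. -/
open Matrix

/-- A function `f : 𝔽₂ⁿ → 𝔽₂` has degree at most `k` if it is represented by some
polynomial over `𝔽₂` of total degree at most `k` (equivalently, its unique representing
polynomial of degree at most `1` in each variable has total degree at most `k`). -/
def HasDegreeLE {n : ℕ} (f : (Fin n → ZMod 2) → ZMod 2) (k : ℕ) : Prop :=
  ∃ p : MvPolynomial (Fin n) (ZMod 2), p.totalDegree ≤ k ∧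
    ∀ v, MvPolynomial.eval v p = f v

namespace CHAux

/-- the character `x ↦ (-1)^x` of `ZMod 2`. -/
noncomputable def χ (x : ZMod 2) : ℂ := (-1 : ℂ) ^ x.val

lemma zmod2_cases (x : ZMod 2) : x = 0 ∨ x = 1 := by
  fin_cases x
  · exact Or.inl rfl
  · exact Or.inr rfl

lemma val01 : (0 : ZMod 2).val = 0 := rfl
lemma val11 : (1 : ZMod 2).val = 1 := rfl
lemma val21 : (2 : ZMod 2).val = 0 := rfl

lemma χ_zero : χ 0 = 1 := by simp [χ]

lemma χ_add (x y : ZMod 2) : χ (x + y) = χ x * χ y := by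
  rcases zmod2_cases x with h | h <;> rcases zmod2_cases y with h' | h' <;>
    subst h <;> subst h' <;> norm_num [χ, val01, val11, val21]

lemma χ_sum {α : Type*} (s : Finset α) (g : α → ZMod 2) :
    χ (∑ i ∈ s, g i) = ∏ i ∈ s, χ (g i) := by
  classical
  induction s using Finset.cons_induction with
  | empty => simp [χ_zero]
  | cons a s ha ih => rw [Finset.sum_cons, Finset.prod_cons, χ_add, ih]

lemma neg_one_pow_sum_val {m : ℕ} (g : Fin m → ZMod 2) :
    (-1 : ℂ) ^ (∑ i, (g i).val) = χ (∑ i, g i) := by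
  rw [χ_sum, ← Finset.prod_pow_eq_pow_sum]
  rfl

lemma χ_ne_zero (x : ZMod 2) : χ x ≠ 0 := by
  rcases zmod2_cases x with h | h <;> subst h <;> norm_num [χ, val01, val11, val21]

lemma χ_real (x : ZMod 2) : (starRingEnd ℂ) (χ x) = χ x := by
  rcases zmod2_cases x with h | h <;> subst h <;> norm_num [χ, val01, val11, val21]

lemma χ_star (x : ZMod 2) : star (χ x) = χ x := χ_real x

lemma χ_mul_self (x : ZMod 2) : χ x * χ x = 1 := by
  rcases zmod2_cases x with h | h <;> subst h <;> norm_num [χ, val01, val11, val21]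

lemma χ_inj {x y : ZMod 2} (h : χ x = χ y) : x = y := by
  rcases zmod2_cases x with hx | hx <;> rcases zmod2_cases y with hy | hy <;>
    subst hx <;> subst hy <;> first | rfl | (norm_num [χ, val01, val11, val21] at h)

lemma zmod2_add_self (x : ZMod 2) : x + x = 0 := by
  rcases zmod2_cases x with h | h <;> subst h <;> rfl

lemma vec_add_add_self {n : ℕ} (b u : Fin n → ZMod 2) : b + u + u = b := by
  funext i; simp [zmod2_add_self, add_assoc]


section Matrices
variable {n : ℕ}

def dot (v b : Fin n → ZMod 2) : ZMod 2 := ∑ i, v i * b i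

lemma dot_add_right (v b b' : Fin n → ZMod 2) : dot v (b + b') = dot v b + dot v b' := by
  simp [dot, mul_add, Finset.sum_add_distrib]

lemma dot_add_left (v v' b : Fin n → ZMod 2) : dot (v + v') b = dot v b + dot v' b := by
  simp [dot, add_mul, Finset.sum_add_distrib]

lemma dot_zero_left (b : Fin n → ZMod 2) : dot (0 : Fin n → ZMod 2) b = 0 := by
  simp [dot]

/-- the generalized Pauli matrix `c · X^u Z^v`. -/
noncomputable def Pmat (c : ℂ) (u v : Fin n → ZMod 2) : Gate n :=
  Matrix.of fun a b => if a = b + u then c * χ (dot v b) else 0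

def cS (c : ℂ) : Prop := c = 1 ∨ c = -1 ∨ c = Complex.I ∨ c = -Complex.I

lemma cS_mul {c c' : ℂ} (h : cS c) (h' : cS c') : cS (c * c') := by
  rcases h with h|h|h|h <;> rcases h' with h'|h'|h'|h' <;> subst h <;> subst h' <;>
    simp [cS, Complex.I_mul_I] <;> ring_nf <;>
    simp [Complex.I_sq, Complex.ext_iff] <;> norm_num

lemma cS_χ (x : ZMod 2) : cS (χ x) := by
  rcases zmod2_cases x with h|h <;> subst h <;> simp [cS, χ, val01, val11]

lemma cS_conj {c : ℂ} (h : cS c) : cS ((starRingEnd ℂ) c) := by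
  rcases h with h|h|h|h <;> subst h <;> simp [cS]

lemma cS_norm {c : ℂ} (h : cS c) : (starRingEnd ℂ) c * c = 1 := by
  rcases h with h|h|h|h <;> subst h <;> simp [Complex.ext_iff] <;> norm_num

lemma mem_pauli_iff (P : Gate n) :
    P ∈ PauliGroup n ↔ ∃ c u v, cS c ∧ P = Pmat c u v := by
  constructor
  · rintro ⟨c, u, v, hc, rfl⟩
    refine ⟨c, u, v, hc, ?_⟩
    ext a b
    simp only [Pmat, Matrix.of_apply]
    rw [neg_one_pow_sum_val]
    rfl
  · rintro ⟨c, u, v, hc, rfl⟩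
    refine ⟨c, u, v, hc, ?_⟩
    ext a b
    simp only [Pmat, Matrix.of_apply]
    rw [neg_one_pow_sum_val]
    rfl

lemma vec_add_cancel_iff (a b u : Fin n → ZMod 2) : a = b + u ↔ b = a + u := by
  constructor <;> rintro rfl
  · rw [vec_add_add_self]
  · rw [vec_add_add_self]

lemma Pmat_mul (c c' : ℂ) (u v u' v' : Fin n → ZMod 2) :
    Pmat c u v * Pmat c' u' v' = Pmat (c * c' * χ (dot v u')) (u + u') (v + v') := by
  ext a b
  simp only [Matrix.mul_apply, Pmat, Matrix.of_apply]
  rw [Finset.sum_eq_single (b + u')]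
  · by_cases hab : a = b + u' + u
    · have h2 : a = b + (u + u') := by rw [hab, add_assoc, add_comm u' u]
      rw [if_pos hab, if_pos rfl, if_pos h2, dot_add_right, dot_add_left, χ_add, χ_add]
      ring
    · have h2 : ¬ a = b + (u + u') := by
        intro h; exact hab (by rw [h, add_assoc, add_comm u u'])
      rw [if_neg hab, if_neg h2, zero_mul]
  · intro x _ hx
    rw [if_neg hx, mul_zero]
  · intro hmem
    exact absurd (Finset.mem_univ _) hmem

lemma Pmat_conjT (c : ℂ) (u v : Fin n → ZMod 2) :
    (Pmat c u v)ᴴ = Pmat ((starRingEnd ℂ) c * χ (dot v u)) u v := by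
  ext a b
  simp only [Matrix.conjTranspose_apply, Pmat, Matrix.of_apply]
  by_cases h : b = a + u
  · have h' : a = b + u := (vec_add_cancel_iff b a u).mp h
    have hd : dot v a = dot v b + dot v u := by rw [h', dot_add_right]
    rw [if_pos h, if_pos h', star_mul', hd, χ_add, star_mul', χ_star, χ_star, starRingEnd_apply]
    ring
  · have h' : ¬ a = b + u := fun hh => h ((vec_add_cancel_iff a b u).mp hh)
    rw [if_neg h, if_neg h', star_zero]

lemma vec_add_self (u : Fin n → ZMod 2) : u + u = 0 := by
  funext i; exact zmod2_add_self (u i)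

lemma Pmat_one : (Pmat 1 0 0 : Gate n) = 1 := by
  ext a b
  simp [Pmat, dot_zero_left, χ_zero, Matrix.one_apply, eq_comm]

lemma pauli_mul {P Q : Gate n} (hP : P ∈ PauliGroup n) (hQ : Q ∈ PauliGroup n) :
    P * Q ∈ PauliGroup n := by
  rw [mem_pauli_iff] at hP hQ ⊢
  obtain ⟨c, u, v, hc, rfl⟩ := hP
  obtain ⟨c', u', v', hc', rfl⟩ := hQ
  exact ⟨_, _, _, cS_mul (cS_mul hc hc') (cS_χ _), Pmat_mul ..⟩

lemma pauli_conjT {P : Gate n} (hP : P ∈ PauliGroup n) : Pᴴ ∈ PauliGroup n := by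
  rw [mem_pauli_iff] at hP ⊢
  obtain ⟨c, u, v, hc, rfl⟩ := hP
  exact ⟨_, _, _, cS_mul (cS_conj hc) (cS_χ _), Pmat_conjT ..⟩

lemma pauli_unitary {P : Gate n} (hP : P ∈ PauliGroup n) : IsUnitaryGate P := by
  rw [mem_pauli_iff] at hP
  obtain ⟨c, u, v, hc, rfl⟩ := hP
  rw [IsUnitaryGate, Matrix.mem_unitaryGroup_iff']
  show (Pmat c u v)ᴴ * Pmat c u v = 1
  rw [Pmat_conjT, Pmat_mul, vec_add_self, vec_add_self]
  have hcoef : (starRingEnd ℂ) c * χ (dot v u) * c * χ (dot v u) = 1 := by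
    calc (starRingEnd ℂ) c * χ (dot v u) * c * χ (dot v u)
        = ((starRingEnd ℂ) c * c) * (χ (dot v u) * χ (dot v u)) := by ring
      _ = 1 := by rw [cS_norm hc, χ_mul_self, mul_one]
  rw [hcoef, Pmat_one]


lemma pauli_conj_mem (m : ℕ) : ∀ {P W : Gate n}, P ∈ PauliGroup n →
    W ∈ CliffordHierarchy n m → P * W * Pᴴ ∈ CliffordHierarchy n m := by
  induction m using Nat.strong_induction_on with
  | _ m ih =>
    match m with
    | 0 | 1 =>
      intro P W hP hW
      exact pauli_mul (pauli_mul hP hW) (pauli_conjT hP)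
    | m + 2 =>
      rintro P W hP ⟨hWu, hWc⟩
      refine ⟨mul_mem (mul_mem (pauli_unitary hP) hWu) (pauli_unitary (pauli_conjT hP)), ?_⟩
      intro Q hQ
      have key : (P * W * Pᴴ) * Q * (P * W * Pᴴ)ᴴ
          = P * (W * (Pᴴ * Q * P) * Wᴴ) * Pᴴ := by
        simp only [Matrix.conjTranspose_mul, Matrix.conjTranspose_conjTranspose, mul_assoc]
      rw [key]
      exact ih (m + 1) (by omega) hP
        (hWc _ (pauli_mul (pauli_mul (pauli_conjT hP) hQ) hP))

lemma pauli_mul_mem (m : ℕ) {P V : Gate n} (hP : P ∈ PauliGroup n)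
    (hV : V ∈ CliffordHierarchy n m) : P * V ∈ CliffordHierarchy n m := by
  match m with
  | 0 | 1 => exact pauli_mul hP hV
  | m + 2 =>
    obtain ⟨hVu, hVc⟩ := hV
    refine ⟨mul_mem (pauli_unitary hP) hVu, ?_⟩
    intro Q hQ
    have key : (P * V) * Q * (P * V)ᴴ = P * (V * Q * Vᴴ) * Pᴴ := by
      simp only [Matrix.conjTranspose_mul, mul_assoc]
    rw [key]
    exact pauli_conj_mem (m + 1) hP (hVc Q hQ)

/-- The diagonal gate with phases `(-1)^(f a)`. -/
noncomputable def Dg (f : (Fin n → ZMod 2) → ZMod 2) : Gate n :=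
  Matrix.diagonal fun a => χ (f a)

lemma Dg_conjT (f : (Fin n → ZMod 2) → ZMod 2) : (Dg f)ᴴ = Dg f := by
  rw [Dg, Matrix.diagonal_conjTranspose]
  have : (star fun a => χ (f a)) = fun a => χ (f a) := funext fun a => χ_star (f a)
  rw [this]

/-- The X-type gate `X^u`. -/
noncomputable def Xg (u : Fin n → ZMod 2) : Gate n := Pmat 1 u 0

lemma Xg_pauli (u : Fin n → ZMod 2) : Xg u ∈ PauliGroup n :=
  (mem_pauli_iff _).mpr ⟨1, u, 0, Or.inl rfl, rfl⟩

lemma Xg_apply (u : Fin n → ZMod 2) (a b : Fin n → ZMod 2) :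
    Xg u a b = if a = b + u then 1 else 0 := by
  simp [Xg, Pmat, dot_zero_left, χ_zero]

lemma Xg_mul_self (u : Fin n → ZMod 2) : Xg u * Xg u = 1 := by
  rw [Xg, Pmat_mul, vec_add_self, dot_zero_left, χ_zero]
  simpa using Pmat_one

lemma Dg_conj_Xg (f : (Fin n → ZMod 2) → ZMod 2) (u : Fin n → ZMod 2) :
    Dg f * Xg u * (Dg f)ᴴ = Xg u * Dg (fun b => f (b + u) + f b) := by
  rw [Dg_conjT]
  ext a b
  simp only [Dg, Matrix.mul_diagonal, Matrix.diagonal_mul, Xg_apply]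
  by_cases h : a = b + u
  · rw [if_pos h, h, χ_add]
    ring
  · rw [if_neg h]
    ring

lemma Dg_step (m : ℕ) (f : (Fin n → ZMod 2) → ZMod 2) (u : Fin n → ZMod 2)
    (h : Dg f ∈ CliffordHierarchy n (m + 2)) :
    Dg (fun b => f (b + u) + f b) ∈ CliffordHierarchy n (m + 1) := by
  have h2 := h.2 (Xg u) (Xg_pauli u)
  rw [Dg_conj_Xg] at h2
  have h3 := pauli_mul_mem (m + 1) (Xg_pauli u) h2
  rwa [← mul_assoc, Xg_mul_self, one_mul] at h3

end Matrices

section Poly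
variable {n : ℕ}

def toSet (v : Fin n → ZMod 2) : Finset (Fin n) := Finset.univ.filter fun i => v i = 1

def ofSet (S : Finset (Fin n)) : Fin n → ZMod 2 := fun i => if i ∈ S then 1 else 0

lemma mem_toSet {v : Fin n → ZMod 2} {i : Fin n} : i ∈ toSet v ↔ v i = 1 := by
  simp [toSet]

lemma ofSet_toSet (v : Fin n → ZMod 2) : ofSet (toSet v) = v := by
  funext i
  simp only [ofSet]
  rcases zmod2_cases (v i) with h | h
  · rw [if_neg (fun hm => by rw [mem_toSet.mp hm] at h; exact one_ne_zero h), h]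
  · rw [if_pos (mem_toSet.mpr h), h]

lemma toSet_ofSet (S : Finset (Fin n)) : toSet (ofSet S) = S := by
  ext i
  rw [mem_toSet]
  simp only [ofSet]
  by_cases h : i ∈ S <;> simp [h]

lemma prod_eq_ind (A : Finset (Fin n)) (x : Fin n → ZMod 2) :
    (∏ i ∈ A, x i) = if A ⊆ toSet x then 1 else 0 := by
  by_cases h : A ⊆ toSet x
  · rw [if_pos h]
    exact Finset.prod_eq_one fun i hi => mem_toSet.mp (h hi)
  · rw [if_neg h]
    obtain ⟨i, hiA, hix⟩ := Finset.not_subset.mp h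
    refine Finset.prod_eq_zero hiA ?_
    rcases zmod2_cases (x i) with h' | h'
    · exact h'
    · exact absurd (mem_toSet.mpr h') hix

lemma count_parity (X V : Finset (Fin n)) :
    (∑ T ∈ X.powerset, if V ⊆ T then (1 : ZMod 2) else 0) = if V = X then 1 else 0 := by
  by_cases hVX : V = X
  · subst hVX
    rw [if_pos rfl, Finset.sum_eq_single V]
    · rw [if_pos Finset.Subset.rfl]
    · intro T hT hne
      exact if_neg fun hsub => hne (Finset.Subset.antisymm (Finset.mem_powerset.mp hT) hsub)
    · intro hmem
      exact absurd (Finset.mem_powerset.mpr Finset.Subset.rfl) hmem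
  · rw [if_neg hVX]
    by_cases hsub : V ⊆ X
    · obtain ⟨i, hiX, hiV⟩ := Finset.exists_of_ssubset (Finset.ssubset_iff_subset_ne.mpr ⟨hsub, hVX⟩)
      refine Finset.sum_involution (fun T _ => if i ∈ T then T.erase i else insert i T)
        ?_ ?_ ?_ ?_
      · intro T hT
        have hiff : (V ⊆ T) ↔ (V ⊆ if i ∈ T then T.erase i else insert i T) := by
          by_cases hiT : i ∈ T
          · rw [if_pos hiT]
            constructor
            · intro hVT j hj
              exact Finset.mem_erase.mpr ⟨fun he => hiV (he ▸ hj), hVT hj⟩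
            · intro hVT j hj
              exact Finset.mem_of_mem_erase (hVT hj)
          · rw [if_neg hiT]
            constructor
            · intro hVT
              exact hVT.trans (Finset.subset_insert _ _)
            · intro hVT j hj
              rcases Finset.mem_insert.mp (hVT hj) with rfl | hjj
              · exact absurd hj hiV
              · exact hjj
        by_cases hc : V ⊆ T
        · rw [if_pos hc, if_pos (hiff.mp hc)]
          exact zmod2_add_self 1
        · rw [if_neg hc, if_neg fun hh => hc (hiff.mpr hh), add_zero]
      · intro T hT _
        beta_reduce
        by_cases hiT : i ∈ T
        · rw [if_pos hiT]
          exact fun hh => (Finset.erase_ne_self.mpr hiT) hh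
        · rw [if_neg hiT]
          exact fun hh => hiT (hh ▸ Finset.mem_insert_self i T)
      · intro T hT
        beta_reduce
        rw [Finset.mem_powerset] at hT ⊢
        by_cases hiT : i ∈ T
        · rw [if_pos hiT]
          exact (Finset.erase_subset _ _).trans hT
        · rw [if_neg hiT]
          exact Finset.insert_subset hiX hT
      · intro T hT
        beta_reduce
        by_cases hiT : i ∈ T
        · rw [if_pos hiT, if_neg (Finset.notMem_erase i T), Finset.insert_erase hiT]
        · rw [if_neg hiT, if_pos (Finset.mem_insert_self i T), Finset.erase_insert hiT]
    · exact Finset.sum_eq_zero fun T hT =>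
        if_neg fun hh => hsub (hh.trans (Finset.mem_powerset.mp hT))

/-- the ANF coefficient of `f` at the monomial `S`. -/
def cf (f : (Fin n → ZMod 2) → ZMod 2) (S : Finset (Fin n)) : ZMod 2 :=
  ∑ T ∈ S.powerset, f (ofSet T)

lemma card_support_le_sum (d : Fin n →₀ ℕ) : d.support.card ≤ d.sum fun _ e => e := by
  rw [Finsupp.sum]
  calc d.support.card = ∑ _i ∈ d.support, 1 := by simp
    _ ≤ ∑ i ∈ d.support, d i :=
        Finset.sum_le_sum fun i hi => Nat.one_le_iff_ne_zero.mpr (Finsupp.mem_support_iff.mp hi)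

lemma sum_powerset_eval (p : MvPolynomial (Fin n) (ZMod 2)) (S : Finset (Fin n))
    (h : p.totalDegree < S.card) :
    ∑ T ∈ S.powerset, MvPolynomial.eval (ofSet T) p = 0 := by
  have hrw : ∀ T : Finset (Fin n), MvPolynomial.eval (ofSet T) p
      = ∑ d ∈ p.support, p.coeff d * (if d.support ⊆ T then 1 else 0) := by
    intro T
    rw [MvPolynomial.eval_eq]
    refine Finset.sum_congr rfl fun d hd => ?_
    congr 1
    have hred : ∀ i ∈ d.support, ofSet T i ^ d i = ofSet T i := by
      intro i hi
      by_cases hiT : i ∈ T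
      · simp [ofSet, hiT]
      · simp [ofSet, hiT, zero_pow (Finsupp.mem_support_iff.mp hi)]
    rw [Finset.prod_congr rfl hred, prod_eq_ind d.support (ofSet T), toSet_ofSet]
  rw [Finset.sum_congr rfl fun T _ => hrw T, Finset.sum_comm]
  refine Finset.sum_eq_zero fun d hd => ?_
  rw [← Finset.mul_sum, count_parity]
  have hne : d.support ≠ S := by
    intro he
    have h1 : d.support.card ≤ p.totalDegree :=
      le_trans (card_support_le_sum d) (MvPolynomial.le_totalDegree hd)
    rw [he] at h1
    omega
  rw [if_neg hne, mul_zero]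

lemma inversion (f : (Fin n → ZMod 2) → ZMod 2) (x : Fin n → ZMod 2) :
    ∑ T ∈ (toSet x).powerset, cf f T = f x := by
  have h1 : ∀ T ∈ (toSet x).powerset, cf f T
      = ∑ V ∈ (toSet x).powerset, (if V ⊆ T then (1 : ZMod 2) else 0) * f (ofSet V) := by
    intro T hT
    rw [cf, show T.powerset = (toSet x).powerset.filter (· ⊆ T) from ?_]
    · rw [Finset.sum_filter]
      refine Finset.sum_congr rfl fun V _ => ?_
      split <;> simp
    · ext V
      simp only [Finset.mem_powerset, Finset.mem_filter]
      exact ⟨fun hh => ⟨hh.trans (Finset.mem_powerset.mp hT), hh⟩, fun hh => hh.2⟩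
  rw [Finset.sum_congr rfl h1, Finset.sum_comm]
  have h2 : ∀ V ∈ (toSet x).powerset,
      (∑ T ∈ (toSet x).powerset, (if V ⊆ T then (1 : ZMod 2) else 0) * f (ofSet V))
      = (if V = toSet x then 1 else 0) * f (ofSet V) := by
    intro V _
    rw [← Finset.sum_mul, count_parity]
  rw [Finset.sum_congr rfl h2, Finset.sum_eq_single (toSet x)]
  · rw [if_pos rfl, one_mul, ofSet_toSet]
  · intro V hV hne
    rw [if_neg hne, zero_mul]
  · intro hmem
    exact absurd (Finset.mem_powerset.mpr Finset.Subset.rfl) hmem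

lemma deg_of_derivs (f : (Fin n → ZMod 2) → ZMod 2) (m : ℕ)
    (hd : ∀ u, HasDegreeLE (fun b => f (b + u) + f b) m) : HasDegreeLE f (m + 1) := by
  classical
  have hvan : ∀ S : Finset (Fin n), m + 1 < S.card → cf f S = 0 := by
    intro S hS
    have hne : S.Nonempty := Finset.card_pos.mp (by omega)
    obtain ⟨i, hi⟩ := hne
    obtain ⟨q, hq, hqe⟩ := hd (ofSet {i})
    have hSi : S = insert i (S.erase i) := (Finset.insert_erase hi).symm
    rw [cf, hSi, Finset.sum_powerset_insert (Finset.notMem_erase i S), ← Finset.sum_add_distrib]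
    have hstep : ∀ T ∈ (S.erase i).powerset,
        f (ofSet T) + f (ofSet (insert i T)) = MvPolynomial.eval (ofSet T) q := by
      intro T hT
      have hiT : i ∉ T := fun hh => Finset.notMem_erase i S (Finset.mem_powerset.mp hT hh)
      have hofs : ofSet (insert i T) = ofSet T + ofSet {i} := by
        funext j
        by_cases hj : j = i
        · subst hj
          simp [ofSet, hiT]
        · simp [ofSet, hj, Finset.mem_insert, Finset.mem_singleton]
      rw [hofs, hqe]
      exact (add_comm _ _)
    rw [Finset.sum_congr rfl hstep]
    refine sum_powerset_eval q _ (lt_of_le_of_lt hq ?_)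
    rw [Finset.card_erase_of_mem hi]
    omega
  refine ⟨∑ S ∈ (Finset.univ : Finset (Fin n)).powerset,
    MvPolynomial.C (cf f S) * ∏ i ∈ S, MvPolynomial.X i, ?_, ?_⟩
  · refine le_trans (MvPolynomial.totalDegree_finset_sum _ _) (Finset.sup_le fun S hS => ?_)
    by_cases hc : S.card ≤ m + 1
    · refine le_trans (MvPolynomial.totalDegree_mul _ _) ?_
      rw [MvPolynomial.totalDegree_C, zero_add]
      refine le_trans (le_trans (MvPolynomial.totalDegree_finset_prod _ _) ?_) hc
      refine le_trans (Finset.sum_le_sum fun i _ => le_of_eq (MvPolynomial.totalDegree_X i)) ?_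
      simp
    · rw [hvan S (by omega), map_zero, zero_mul, MvPolynomial.totalDegree_zero]
      omega
  · intro v
    rw [map_sum]
    have h3 : ∀ S ∈ (Finset.univ : Finset (Fin n)).powerset,
        MvPolynomial.eval v (MvPolynomial.C (cf f S) * ∏ i ∈ S, MvPolynomial.X i)
        = if S ⊆ toSet v then cf f S else 0 := by
      intro S _
      rw [_root_.map_mul, MvPolynomial.eval_C, map_prod]
      simp only [MvPolynomial.eval_X]
      rw [prod_eq_ind S v]
      split <;> simp
    rw [Finset.sum_congr rfl h3, ← Finset.sum_filter,
      show (Finset.univ : Finset (Fin n)).powerset.filter (· ⊆ toSet v) = (toSet v).powerset from ?_]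
    · exact inversion f v
    · ext V
      simp [Finset.mem_powerset, Finset.mem_filter]

end Poly

section Final
variable {n : ℕ}

lemma dot_zero_right (v : Fin n → ZMod 2) : dot v 0 = 0 := by
  simp [dot]

lemma diag_pauli_affine (f : (Fin n → ZMod 2) → ZMod 2) (h : Dg f ∈ PauliGroup n) :
    HasDegreeLE f 1 := by
  rw [mem_pauli_iff] at h
  obtain ⟨c, u, v, hc, hP⟩ := h
  have hu0 : u = 0 := by
    by_contra hne
    have h0 : Dg f 0 0 = Pmat c u v 0 0 := by rw [hP]
    rw [Dg, Matrix.diagonal_apply_eq] at h0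
    have hcond : ¬((0 : Fin n → ZMod 2) = 0 + u) := by
      rw [zero_add]
      exact fun hh => hne hh.symm
    rw [show Pmat c u v 0 0 = 0 from if_neg hcond] at h0
    exact χ_ne_zero _ h0
  subst hu0
  have key : ∀ a, χ (f a) = c * χ (dot v a) := by
    intro a
    have h0 : Dg f a a = Pmat c 0 v a a := by rw [hP]
    rw [Dg, Matrix.diagonal_apply_eq] at h0
    rw [show Pmat c 0 v a a = c * χ (dot v a) from if_pos (by rw [add_zero])] at h0
    exact h0
  have hc0 : c = χ (f 0) := by
    have := key 0
    rw [dot_zero_right, χ_zero, mul_one] at this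
    exact this.symm
  have hf : ∀ a, f a = f 0 + dot v a := by
    intro a
    apply χ_inj
    rw [χ_add, key a, hc0]
  refine ⟨MvPolynomial.C (f 0) + ∑ i, MvPolynomial.C (v i) * MvPolynomial.X i, ?_, ?_⟩
  · refine le_trans (MvPolynomial.totalDegree_add _ _) (max_le ?_ ?_)
    · simp [MvPolynomial.totalDegree_C]
    · refine le_trans (MvPolynomial.totalDegree_finset_sum _ _) (Finset.sup_le fun i _ => ?_)
      refine le_trans (MvPolynomial.totalDegree_mul _ _) ?_
      simp [MvPolynomial.totalDegree_C, MvPolynomial.totalDegree_X]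
  · intro a
    rw [map_add, map_sum, MvPolynomial.eval_C]
    have he : ∀ i ∈ (Finset.univ : Finset (Fin n)),
        MvPolynomial.eval a (MvPolynomial.C (v i) * MvPolynomial.X i) = v i * a i := by
      intro i _
      rw [_root_.map_mul, MvPolynomial.eval_C, MvPolynomial.eval_X]
    rw [Finset.sum_congr rfl he, hf a]
    rfl

lemma diag_deg : ∀ m (f : (Fin n → ZMod 2) → ZMod 2),
    Dg f ∈ CliffordHierarchy n (m + 1) → HasDegreeLE f (m + 1) := by
  intro m
  induction m with
  | zero => exact fun f h => diag_pauli_affine f h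
  | succ m ih => exact fun f h => deg_of_derivs f (m + 1) fun u => ih _ (Dg_step m f u h)

lemma permGate_conjT (σ : Equiv.Perm (Fin n → ZMod 2)) :
    (permGate σ)ᴴ = permGate σ.symm := by
  ext a b
  simp only [Matrix.conjTranspose_apply, permGate, Matrix.of_apply]
  by_cases h : b = σ a
  · rw [if_pos h, if_pos (by rw [h, Equiv.symm_apply_apply]), star_one]
  · rw [if_neg h, if_neg (fun hh => h (by rw [hh, Equiv.apply_symm_apply])), star_zero]

lemma permGate_mul_apply (σ : Equiv.Perm (Fin n → ZMod 2)) (M : Gate n) (a b : Fin n → ZMod 2) :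
    (permGate σ * M) a b = M (σ.symm a) b := by
  rw [Matrix.mul_apply, Finset.sum_eq_single (σ.symm a)]
  · rw [show permGate σ a (σ.symm a) = 1 from if_pos (by rw [Equiv.apply_symm_apply]), one_mul]
  · intro x _ hx
    rw [show permGate σ a x = 0 from
      if_neg (fun hh => hx (by rw [hh, Equiv.symm_apply_apply])), zero_mul]
  · intro hmem
    exact absurd (Finset.mem_univ _) hmem

lemma mul_permGate_apply (σ : Equiv.Perm (Fin n → ZMod 2)) (M : Gate n) (a b : Fin n → ZMod 2) :
    (M * permGate σ) a b = M a (σ b) := by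
  rw [Matrix.mul_apply, Finset.sum_eq_single (σ b)]
  · rw [show permGate σ (σ b) b = 1 from if_pos rfl, mul_one]
  · intro x _ hx
    rw [show permGate σ x b = 0 from if_neg hx, mul_zero]
  · intro hmem
    exact absurd (Finset.mem_univ _) hmem

def ei (i : Fin n) : Fin n → ZMod 2 := fun j => if j = i then 1 else 0

lemma dot_ei (i : Fin n) (w : Fin n → ZMod 2) : dot (ei i) w = w i := by
  rw [dot]
  have : ∀ j ∈ (Finset.univ : Finset (Fin n)), ei i j * w j = if j = i then w j else 0 := by
    intro j _
    by_cases hj : j = i <;> simp [ei, hj]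
  rw [Finset.sum_congr rfl this, Finset.sum_ite_eq' Finset.univ i w, if_pos (Finset.mem_univ i)]

lemma Z_pauli (i : Fin n) : Pmat 1 0 (ei i) ∈ PauliGroup n :=
  (mem_pauli_iff _).mpr ⟨1, 0, ei i, Or.inl rfl, rfl⟩

lemma perm_conj_Z (σ : Equiv.Perm (Fin n → ZMod 2)) (i : Fin n) :
    permGate σ * Pmat 1 0 (ei i) * (permGate σ)ᴴ = Dg (fun a => σ.symm a i) := by
  rw [permGate_conjT]
  ext a b
  rw [mul_permGate_apply, permGate_mul_apply]
  show (if σ.symm a = σ.symm b + 0 then 1 * χ (dot (ei i) (σ.symm b)) else 0) = _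
  rw [add_zero, one_mul, dot_ei]
  by_cases h : a = b
  · subst h
    rw [if_pos rfl]
    simp only [Dg]
    rw [Matrix.diagonal_apply_eq]
  · rw [if_neg (fun hh => h (σ.symm.injective hh))]
    simp only [Dg]
    rw [Matrix.diagonal_apply_ne _ h]

end Final
end CHAux

/-- If a permutation gate with underlying permutation `σ` lies in `𝒞_{k+1}`, then every
coordinate of `σ⁻¹` has degree at most `k` as a polynomial over `𝔽₂`. -/
theorem coords_of_inv_perm_degree_le (n k : ℕ) (hn : 1 ≤ n) (hk : 1 ≤ k)
    (σ : Equiv.Perm (Fin n → ZMod 2))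
    (h : permGate σ ∈ CliffordHierarchy n (k + 1)) :
    ∀ i : Fin n, HasDegreeLE (fun v => σ.symm v i) k := by
  intro i
  obtain ⟨m, rfl⟩ : ∃ m, k = m + 1 := ⟨k - 1, by omega⟩
  obtain ⟨hu, hc⟩ := h
  have h2 := hc (CHAux.Pmat 1 0 (CHAux.ei i)) (CHAux.Z_pauli i)
  rw [CHAux.perm_conj_Z] at h2
  exact CHAux.diag_deg m _ h2
end

section
/- Let A be a maximal abelian subgroup of 𝒫ₙ and let B be any abelian subgroup of 𝒫ₙ. Then there exists a maximal abelian subgroup A' of 𝒫ₙ such that B ⊆ A' ⊆ ⟨A, B⟩, where ⟨A, B⟩ is the subgroup generated by A and B. -/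
open Matrix

/-- A set of gates that is a subgroup: contains the identity and is closed under
multiplication and inverses. -/
def IsSubgroupSet {n : ℕ} (S : Set (Gate n)) : Prop :=
  (1 : Gate n) ∈ S ∧ (∀ a ∈ S, ∀ b ∈ S, a * b ∈ S) ∧ ∀ a ∈ S, a⁻¹ ∈ S

def IsAbelianSet {n : ℕ} (S : Set (Gate n)) : Prop :=
  ∀ a ∈ S, ∀ b ∈ S, a * b = b * a

/-- A maximal abelian subgroup of `𝒫ₙ`: an abelian subgroup of `𝒫ₙ` not properly
contained in any abelian subgroup of `𝒫ₙ`. -/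
def IsMaxAbelianSubgroupOfPauli {n : ℕ} (S : Set (Gate n)) : Prop :=
  S ⊆ PauliGroup n ∧ IsSubgroupSet S ∧ IsAbelianSet S ∧
  ∀ T, T ⊆ PauliGroup n → IsSubgroupSet T → IsAbelianSet T → S ⊆ T → T = S

/-!
Write Pauli operators as `c X^u Z^v`. Two of them commute iff the symplectic form
`ω((u, v), (u', v')) = v ⬝ u' + v' ⬝ u` over `𝔽₂` vanishes, so the footprint
`{(u, v) | c X^u Z^v ∈ S for some phase c}` of an abelian subgroup `S` is isotropic, and that of a
maximal abelian one is Lagrangian: maximality means that `S` contains every Pauli operator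
commuting with it. Let `A'` be generated by `B` and the centralizer of `B` in `A`, and let `L`, `W`
be the footprints of `A`, `B`. The footprint of `A'` contains `W + (L ∩ W^⊥)`, whose orthogonal is
`W^⊥ ∩ (L + W) = W + (L ∩ W^⊥)` by the modular law. Since `A'` also contains all scalar phases
(they lie in `A`), every Pauli operator commuting with `A'` lies in `A'`.
-/

namespace LinearMap.BilinForm

open LinearMap (BilinForm)

variable {R M : Type*} [CommSemiring R] [AddCommMonoid M] [Module R M] {B : BilinForm R M}

lemma orthogonal_sup (U W : Submodule R M) :
    B.orthogonal (U ⊔ W) = B.orthogonal U ⊓ B.orthogonal W := by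
  refine le_antisymm (le_inf (orthogonal_le le_sup_left) (orthogonal_le le_sup_right)) ?_
  rintro x ⟨hU, hW⟩ _ hm
  obtain ⟨u, hu, w, hw, rfl⟩ := Submodule.mem_sup.1 hm
  rw [map_add, LinearMap.add_apply, hU u hu, hW w hw, add_zero]

variable {K V : Type*} [Field K] [AddCommGroup V] [Module K V] [FiniteDimensional K V]
  {B : BilinForm K V}

lemma orthogonal_inf (hB : B.Nondegenerate) (hB' : B.IsRefl) (U W : Submodule K V) :
    B.orthogonal (U ⊓ W) = B.orthogonal U ⊔ B.orthogonal W := by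
  conv_lhs => rw [← orthogonal_orthogonal hB hB' U, ← orthogonal_orthogonal hB hB' W,
    ← orthogonal_sup, orthogonal_orthogonal hB hB']

lemma orthogonal_sup_inf_orthogonal (hB : B.Nondegenerate) (hB' : B.IsRefl)
    {L W : Submodule K V} (hL : B.orthogonal L = L) (hW : W ≤ B.orthogonal W) :
    B.orthogonal (W ⊔ L ⊓ B.orthogonal W) = W ⊔ L ⊓ B.orthogonal W := by
  rw [orthogonal_sup, orthogonal_inf hB hB', hL, orthogonal_orthogonal hB hB', inf_comm,
    sup_comm L, sup_inf_assoc_of_le L hW]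

end LinearMap.BilinForm

namespace Pauli

variable {n : ℕ}

def sign (x : ZMod 2) : ℂ := (-1) ^ x.val

lemma sign_zero : sign 0 = 1 := by simp [sign]

lemma sign_one : sign 1 = -1 := by simp [sign, ZMod.val_one]

lemma sign_add (x y : ZMod 2) : sign (x + y) = sign x * sign y := by
  rw [sign, ZMod.val_add, ← neg_one_pow_eq_pow_mod_two, pow_add, sign, sign]

lemma sign_mul_self (x : ZMod 2) : sign x * sign x = 1 := by
  rw [← sign_add, CharTwo.add_self_eq_zero, sign_zero]

lemma sign_injective : Function.Injective sign := by
  have cases : ∀ z : ZMod 2, z = 0 ∨ z = 1 := by decide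
  intro x y
  rcases cases x with rfl | rfl <;> rcases cases y with rfl | rfl <;>
    norm_num [sign_zero, sign_one]

lemma sign_sum {ι : Type*} (s : Finset ι) (f : ι → ZMod 2) :
    sign (∑ i ∈ s, f i) = (-1) ^ ∑ i ∈ s, (f i).val := by
  classical
  induction s using Finset.induction_on with
  | empty => simp [sign_zero]
  | insert a s ha ih => rw [Finset.sum_insert ha, Finset.sum_insert ha, sign_add, ih, pow_add]; rfl

lemma pow_four_eq_one_iff {c : ℂ} :
    c ^ 4 = 1 ↔ c = 1 ∨ c = -1 ∨ c = Complex.I ∨ c = -Complex.I := by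
  constructor
  · intro h
    have : (c - 1) * ((c + 1) * ((c - Complex.I) * (c + Complex.I))) = 0 := by
      linear_combination (1 - c ^ 2) * Complex.I_sq + h
    simp only [mul_eq_zero, sub_eq_zero, add_eq_zero_iff_eq_neg] at this
    exact this
  · rintro (rfl | rfl | rfl | rfl) <;> norm_num [show (4 : ℕ) = 2 * 2 from rfl, pow_mul]

lemma ne_zero_of_pow_four_eq_one {c : ℂ} (hc : c ^ 4 = 1) : c ≠ 0 :=
  ne_zero_pow four_ne_zero (hc ▸ one_ne_zero)

lemma mul_mul_sign_pow_four {c c' : ℂ} (hc : c ^ 4 = 1) (hc' : c' ^ 4 = 1) (s : ZMod 2) :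
    (c * c' * sign s) ^ 4 = 1 := by
  rw [mul_pow, mul_pow, hc, hc', show sign s ^ 4 = (sign s * sign s) ^ 2 by ring, sign_mul_self]
  norm_num

abbrev Vec (n : ℕ) := (Fin n → ZMod 2) × (Fin n → ZMod 2)

/-- `op c (u, v)` is `c X^u Z^v`, which sends `|b⟩` to `c (-1)^(v ⬝ b) |b + u⟩`. -/
def op (c : ℂ) (x : Vec n) : Gate n :=
  of fun a b => if a = b + x.1 then c * sign (x.2 ⬝ᵥ b) else 0

lemma mem_pauliGroup_iff {P : Gate n} :
    P ∈ PauliGroup n ↔ ∃ c x, c ^ 4 = 1 ∧ P = op c x := by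
  have hop (c : ℂ) (u v : Fin n → ZMod 2) : op c (u, v) = of fun a b =>
      if a = b + u then c * (-1 : ℂ) ^ (∑ i, (v i * b i).val) else 0 := by
    simp only [op, dotProduct, sign_sum]
  simp only [PauliGroup, Set.mem_ofPred_eq, pow_four_eq_one_iff, Prod.exists, hop]

lemma op_mul_op (c c' : ℂ) (x y : Vec n) :
    op c x * op c' y = op (c * c' * sign (x.2 ⬝ᵥ y.1)) (x + y) := by
  ext a b
  simp only [op, mul_apply, of_apply, Prod.fst_add, Prod.snd_add]
  rw [Finset.sum_eq_single (b + y.1) (fun _ _ h => by rw [if_neg h, mul_zero]) (by simp),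
    if_pos rfl, add_assoc, add_comm y.1, dotProduct_add, add_dotProduct, sign_add, sign_add]
  split_ifs <;> ring

lemma op_zero (c : ℂ) : op c (0 : Vec n) = c • 1 := by
  ext a b
  by_cases h : a = b <;> simp [op, one_apply, h, sign_zero]

lemma op_one_zero : op 1 (0 : Vec n) = 1 := by rw [op_zero, one_smul]

lemma smul_op (d c : ℂ) (x : Vec n) : d • op c x = op (d * c) x := by
  ext a b
  simp only [op, Matrix.smul_apply, of_apply, smul_eq_mul]
  split_ifs <;> ring

lemma op_left_injective (x : Vec n) : Function.Injective fun c : ℂ => op c x := by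
  intro c c' h
  simpa [op, sign_zero] using congrFun (congrFun h x.1) 0

lemma op_mem_pauliGroup {c : ℂ} (hc : c ^ 4 = 1) (x : Vec n) : op c x ∈ PauliGroup n :=
  mem_pauliGroup_iff.2 ⟨c, x, hc, rfl⟩

open LinearMap (BilinForm) in
def symp : BilinForm (ZMod 2) (Vec n) :=
  LinearMap.mk₂ (ZMod 2) (fun x y => x.2 ⬝ᵥ y.1 + y.2 ⬝ᵥ x.1)
    (by intros; simp only [Prod.fst_add, Prod.snd_add, dotProduct_add, add_dotProduct]; ring)
    (by intros; simp only [Prod.smul_fst, Prod.smul_snd, dotProduct_smul, smul_dotProduct]; ring)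
    (by intros; simp only [Prod.fst_add, Prod.snd_add, dotProduct_add, add_dotProduct]; ring)
    (by intros; simp only [Prod.smul_fst, Prod.smul_snd, dotProduct_smul, smul_dotProduct]; ring)

lemma symp_apply (x y : Vec n) : symp x y = x.2 ⬝ᵥ y.1 + y.2 ⬝ᵥ x.1 := rfl

lemma symp_comm (x y : Vec n) : symp x y = symp y x := add_comm _ _

lemma symp_isRefl : (symp (n := n)).IsRefl := fun x y h => by rwa [symp_comm]

lemma symp_nondegenerate : (symp (n := n)).Nondegenerate := by
  refine (LinearMap.IsRefl.nondegenerate_iff_separatingLeft symp_isRefl).2 fun x hx => ?_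
  ext j
  · simpa [symp_apply] using hx (0, Pi.single j 1)
  · simpa [symp_apply] using hx (Pi.single j 1, 0)

lemma op_mul_comm_iff {c c' : ℂ} (hc : c ≠ 0) (hc' : c' ≠ 0) {x y : Vec n} :
    op c x * op c' y = op c' y * op c x ↔ symp x y = 0 := by
  rw [op_mul_op, op_mul_op, add_comm y, (op_left_injective _).eq_iff, mul_comm c',
    mul_right_inj' (mul_ne_zero hc hc'), sign_injective.eq_iff, symp_apply, CharTwo.add_eq_zero]

def pauliSubmonoid (n : ℕ) : Submonoid (Gate n) where
  carrier := PauliGroup n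
  mul_mem' {g h} hg hh := by
    obtain ⟨c, x, hc, rfl⟩ := mem_pauliGroup_iff.1 hg
    obtain ⟨c', y, hc', rfl⟩ := mem_pauliGroup_iff.1 hh
    rw [op_mul_op]
    exact op_mem_pauliGroup (mul_mul_sign_pow_four hc hc' _) _
  one_mem' := op_one_zero ▸ op_mem_pauliGroup (one_pow 4) 0

lemma closure_subset_pauliGroup {S : Set (Gate n)} (hS : S ⊆ PauliGroup n) :
    (Submonoid.closure S : Set (Gate n)) ⊆ PauliGroup n :=
  Submonoid.closure_le (S := pauliSubmonoid n) |>.2 hS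

lemma pow_four_eq_one_of_mem_pauliGroup {g : Gate n} (hg : g ∈ PauliGroup n) : g ^ 4 = 1 := by
  obtain ⟨c, x, hc, rfl⟩ := mem_pauliGroup_iff.1 hg
  have hsq : op c x ^ 2 = op (c * c * sign (x.2 ⬝ᵥ x.1)) 0 := by
    rw [sq, op_mul_op, show x + x = 0 by ext <;> exact CharTwo.add_self_eq_zero _]
  rw [show 4 = 2 * 2 from rfl, pow_mul, hsq, op_zero, smul_pow, one_pow,
    show (c * c * _) ^ 2 = c ^ 4 * (sign (x.2 ⬝ᵥ x.1) * sign (x.2 ⬝ᵥ x.1)) by ring, hc,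
    sign_mul_self, one_mul, one_smul]

lemma inv_eq_pow_three {g : Gate n} (hg : g ∈ PauliGroup n) : g⁻¹ = g ^ 3 :=
  inv_eq_left_inv (by rw [← pow_succ, pow_four_eq_one_of_mem_pauliGroup hg])

lemma isSubgroupSet_of_subset_pauliGroup (S : Submonoid (Gate n))
    (hS : (S : Set (Gate n)) ⊆ PauliGroup n) : IsSubgroupSet (S : Set (Gate n)) :=
  ⟨S.one_mem, fun _ ha _ hb => S.mul_mem ha hb,
    fun _ ha => inv_eq_pow_three (hS ha) ▸ S.pow_mem ha 3⟩

lemma isAbelianSet_closure {S : Set (Gate n)} (hS : IsAbelianSet S) :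
    IsAbelianSet (Submonoid.closure S : Set (Gate n)) := fun a ha b hb =>
  have h := Submonoid.closure_le_centralizer_centralizer S
  Set.centralizer_centralizer_comm_of_comm hS a (h ha) b (h hb)

def footprint (S : Submonoid (Gate n)) : Submodule (ZMod 2) (Vec n) where
  carrier := {x | ∃ c : ℂ, c ^ 4 = 1 ∧ op c x ∈ S}
  add_mem' := by
    rintro x y ⟨c, hc, hx⟩ ⟨c', hc', hy⟩
    exact ⟨_, mul_mul_sign_pow_four hc hc' _, op_mul_op c c' x y ▸ S.mul_mem hx hy⟩
  zero_mem' := ⟨1, one_pow 4, op_one_zero ▸ S.one_mem⟩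
  smul_mem' := by
    have cases : ∀ z : ZMod 2, z = 0 ∨ z = 1 := by decide
    rintro a x hx
    rcases cases a with rfl | rfl
    · exact zero_smul (ZMod 2) x ▸ ⟨1, one_pow 4, op_one_zero ▸ S.one_mem⟩
    · rwa [one_smul]

lemma footprint_mono {S T : Submonoid (Gate n)} (h : S ≤ T) : footprint S ≤ footprint T :=
  fun _ ⟨c, hc, hx⟩ => ⟨c, hc, h hx⟩

lemma op_mem_centralizer_iff {S : Submonoid (Gate n)} (hS : (S : Set (Gate n)) ⊆ PauliGroup n)
    {c : ℂ} (hc : c ≠ 0) {x : Vec n} :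
    op c x ∈ Set.centralizer (S : Set (Gate n)) ↔ x ∈ symp.orthogonal (footprint S) := by
  constructor
  · rintro h y ⟨c', hc', hy⟩
    exact (op_mul_comm_iff (ne_zero_of_pow_four_eq_one hc') hc).1 (h _ hy)
  · intro h a ha
    obtain ⟨c', y, hc', rfl⟩ := mem_pauliGroup_iff.1 (hS ha)
    exact (op_mul_comm_iff (ne_zero_of_pow_four_eq_one hc') hc).2 (h y ⟨c', hc', ha⟩)

lemma footprint_le_orthogonal {S : Submonoid (Gate n)} (hS : (S : Set (Gate n)) ⊆ PauliGroup n)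
    (hab : IsAbelianSet (S : Set (Gate n))) : footprint S ≤ symp.orthogonal (footprint S) :=
  fun _ ⟨_, hc, hx⟩ => (op_mem_centralizer_iff hS (ne_zero_of_pow_four_eq_one hc)).1
    fun _ ha => hab _ ha _ hx

lemma orthogonal_footprint_le {S : Submonoid (Gate n)} (hS : (S : Set (Gate n)) ⊆ PauliGroup n)
    (hcent : PauliGroup n ∩ Set.centralizer S ⊆ S) : symp.orthogonal (footprint S) ≤ footprint S :=
  fun x hx => ⟨1, one_pow 4,
    hcent ⟨op_mem_pauliGroup (one_pow 4) x, (op_mem_centralizer_iff hS one_ne_zero).2 hx⟩⟩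

lemma op_mem_of_mem_footprint {S : Submonoid (Gate n)}
    (hphase : ∀ d : ℂ, d ^ 4 = 1 → d • (1 : Gate n) ∈ S) {c : ℂ} (hc : c ^ 4 = 1) {x : Vec n}
    (hx : x ∈ footprint S) : op c x ∈ S := by
  obtain ⟨c₀, hc₀, hx⟩ := hx
  have hc₀' := ne_zero_of_pow_four_eq_one hc₀
  rw [← div_mul_cancel₀ c hc₀', ← smul_op, ← smul_one_mul]
  exact S.mul_mem (hphase _ (by rw [div_pow, hc, hc₀, div_one])) hx

lemma isMaxAbelianSubgroupOfPauli_iff {S : Set (Gate n)} :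
    IsMaxAbelianSubgroupOfPauli S ↔ S ⊆ PauliGroup n ∧ IsSubgroupSet S ∧ IsAbelianSet S ∧
      PauliGroup n ∩ S.centralizer ⊆ S := by
  refine ⟨fun ⟨hP, hgrp, hab, hmax⟩ => ⟨hP, hgrp, hab, ?_⟩,
    fun ⟨hP, hgrp, hab, hcent⟩ => ⟨hP, hgrp, hab, fun T hTP _ hTab hST => ?_⟩⟩
  · rintro g ⟨hg, hgc⟩
    have hab' : IsAbelianSet (insert g S) := by
      rintro a (rfl | ha) b (rfl | hb)
      exacts [rfl, (hgc b hb).symm, hgc a ha, hab a ha b hb]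
    have hT := closure_subset_pauliGroup (Set.insert_subset hg hP)
    rw [← hmax _ hT (isSubgroupSet_of_subset_pauliGroup _ hT) (isAbelianSet_closure hab')
      ((Set.subset_insert g S).trans Submonoid.subset_closure)]
    exact Submonoid.subset_closure (Set.mem_insert g S)
  · exact Set.Subset.antisymm (fun t ht => hcent ⟨hTP ht, fun s hs => hTab s (hST hs) t ht⟩) hST

def _root_.IsSubgroupSet.toSubmonoid {S : Set (Gate n)} (h : IsSubgroupSet S) :
    Submonoid (Gate n) where
  carrier := S
  mul_mem' ha hb := h.2.1 _ ha _ hb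
  one_mem' := h.1

lemma pauliGroup_inter_centralizer_closure_subset {A : Submonoid (Gate n)} {B : Set (Gate n)}
    (hAP : (A : Set (Gate n)) ⊆ PauliGroup n) (hAab : IsAbelianSet (A : Set (Gate n)))
    (hAcent : PauliGroup n ∩ Set.centralizer A ⊆ A) (hB : B ⊆ PauliGroup n)
    (hBab : IsAbelianSet B) :
    PauliGroup n ∩ Set.centralizer (Submonoid.closure (A ∩ B.centralizer ∪ B) : Set (Gate n)) ⊆
      Submonoid.closure (A ∩ B.centralizer ∪ B) := by
  set A' := Submonoid.closure ((A : Set (Gate n)) ∩ B.centralizer ∪ B)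
  have hA'P : (A' : Set (Gate n)) ⊆ PauliGroup n :=
    closure_subset_pauliGroup (Set.union_subset (Set.inter_subset_left.trans hAP) hB)
  have hBP := closure_subset_pauliGroup hB
  set L := footprint A
  set W := footprint (Submonoid.closure B)
  have hL : symp.orthogonal L = L :=
    (orthogonal_footprint_le hAP hAcent).antisymm (footprint_le_orthogonal hAP hAab)
  have hW : W ≤ symp.orthogonal W := footprint_le_orthogonal hBP (isAbelianSet_closure hBab)
  have hM : W ⊔ L ⊓ symp.orthogonal W ≤ footprint A' := by
    refine sup_le (footprint_mono (Submonoid.closure_mono Set.subset_union_right)) ?_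
    rintro x ⟨⟨c, hc, hx⟩, hxW⟩
    have hxB := (op_mem_centralizer_iff hBP (ne_zero_of_pow_four_eq_one hc)).2 hxW
    exact ⟨c, hc, Submonoid.subset_closure
      (Or.inl ⟨hx, Set.centralizer_subset Submonoid.subset_closure hxB⟩)⟩
  have hscalar (d : ℂ) (T : Set (Gate n)) : d • (1 : Gate n) ∈ T.centralizer :=
    fun m _ => ((Commute.one_right m).smul_right d).eq
  have hphase (d : ℂ) (hd : d ^ 4 = 1) : d • (1 : Gate n) ∈ A' :=
    Submonoid.subset_closure (Or.inl ⟨hAcent ⟨op_zero d ▸ op_mem_pauliGroup hd 0,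
      hscalar d _⟩, hscalar d _⟩)
  rintro g ⟨hg, hgc⟩
  obtain ⟨c, x, hc, rfl⟩ := mem_pauliGroup_iff.1 hg
  have hx := symp.orthogonal_le hM
    ((op_mem_centralizer_iff hA'P (ne_zero_of_pow_four_eq_one hc)).1 hgc)
  rw [LinearMap.BilinForm.orthogonal_sup_inf_orthogonal symp_nondegenerate symp_isRefl hL hW] at hx
  exact op_mem_of_mem_footprint hphase hc (hM hx)

end Pauli

open Pauli in
theorem exists_maxAbelian_between_general (n : ℕ) (A B : Set (Gate n))
    (hA : IsMaxAbelianSubgroupOfPauli A)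
    (hB : B ⊆ PauliGroup n) (hBab : IsAbelianSet B) :
    ∃ A', IsMaxAbelianSubgroupOfPauli A' ∧ B ⊆ A' ∧
      ∀ T : Set (Gate n), IsSubgroupSet T → A ⊆ T → B ⊆ T → A' ⊆ T := by
  obtain ⟨hAP, hAgrp, hAab, hAcent⟩ := isMaxAbelianSubgroupOfPauli_iff.1 hA
  have hgens : A ∩ B.centralizer ∪ B ⊆ PauliGroup n :=
    Set.union_subset (Set.inter_subset_left.trans hAP) hB
  have hA'P := closure_subset_pauliGroup hgens
  have hgens_ab : IsAbelianSet (A ∩ B.centralizer ∪ B) := by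
    rintro a (⟨haA, haB⟩ | ha) b (⟨hbA, hbB⟩ | hb)
    exacts [hAab a haA b hbA, (haB b hb).symm, hbB a ha, hBab a ha b hb]
  refine ⟨Submonoid.closure (A ∩ B.centralizer ∪ B), isMaxAbelianSubgroupOfPauli_iff.2
    ⟨hA'P, isSubgroupSet_of_subset_pauliGroup _ hA'P, isAbelianSet_closure hgens_ab,
      pauliGroup_inter_centralizer_closure_subset (A := hAgrp.toSubmonoid) hAP hAab hAcent hB hBab⟩,
    fun b hb => Submonoid.subset_closure (Or.inr hb), fun T hT hAT hBT => ?_⟩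
  exact Submonoid.closure_le (S := hT.toSubmonoid) |>.2
    (Set.union_subset (Set.inter_subset_left.trans hAT) hBT)

/-- If `A` is a maximal abelian subgroup of `𝒫ₙ` and `B` is an abelian subgroup of `𝒫ₙ`,
then there is a maximal abelian subgroup `A'` of `𝒫ₙ` with `B ⊆ A' ⊆ ⟨A, B⟩`
(the last inclusion being expressed as: `A'` is contained in every subgroup
containing both `A` and `B`). -/
theorem exists_maxAbelian_between (n : ℕ) (hn : 1 ≤ n) (A B : Set (Gate n))
    (hA : IsMaxAbelianSubgroupOfPauli A)
    (hB : B ⊆ PauliGroup n) (hBgrp : IsSubgroupSet B) (hBab : IsAbelianSet B) :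
    ∃ A', IsMaxAbelianSubgroupOfPauli A' ∧ B ⊆ A' ∧
      ∀ T : Set (Gate n), IsSubgroupSet T → A ⊆ T → B ⊆ T → A' ⊆ T :=
  exists_maxAbelian_between_general n A B hA hB hBab
end

section
/- Let A₁, …, A_k be linear endomorphisms of an n-dimensional vector space V over a field F such that Aⱼ² = 0 for all j and AᵢAⱼ = AⱼAᵢ for all i, j. Then there exists a basis of V in which all the Aᵢ are simultaneously strictly lower triangular (i.e., lower triangular with all diagonal entries equal to 0). -/
open Module Submodule

section CommutingSquareZero

variable {R M ι : Type*} [Semiring R] [AddCommMonoid M] [Module R M]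

/-- If `A j v ≠ 0`, then `A j v` is killed by `A j` and by every `A i` that kills `v`; adding the
maps one at a time therefore never loses a common nonzero kernel vector. -/
theorem exists_ne_zero_forall_apply_eq_zero_of_commute [Nontrivial M] [Finite ι]
    (A : ι → M →ₗ[R] M) (hsq : ∀ j, A j ∘ₗ A j = 0)
    (hcomm : ∀ i j, A i ∘ₗ A j = A j ∘ₗ A i) :
    ∃ v : M, v ≠ 0 ∧ ∀ j, A j v = 0 := by
  have : Fintype ι := Fintype.ofFinite ι
  suffices h : ∀ s : Finset ι, ∃ v : M, v ≠ 0 ∧ ∀ j ∈ s, A j v = 0 by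
    simpa using h Finset.univ
  intro s
  induction s using Finset.cons_induction with
  | empty => simpa using exists_ne (0 : M)
  | cons j s _ ih =>
    obtain ⟨v, hv, hvs⟩ := ih
    by_cases hjv : A j v = 0
    · exact ⟨v, hv, by simpa [hjv] using hvs⟩
    · refine ⟨A j v, hjv, ?_⟩
      simp only [Finset.mem_cons, forall_eq_or_imp]
      refine ⟨LinearMap.congr_fun (hsq j) v, fun i hi => ?_⟩
      rw [← LinearMap.comp_apply, hcomm, LinearMap.comp_apply, hvs i hi, map_zero]

end CommutingSquareZero

section Triangular

variable {F V ι : Type*} [Field F] [AddCommGroup V] [Module F V] [Finite ι]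

theorem exists_dual_ne_zero_forall_comp_eq_zero_of_commute [Nontrivial V]
    (A : ι → V →ₗ[F] V) (hsq : ∀ j, A j ∘ₗ A j = 0)
    (hcomm : ∀ i j, A i ∘ₗ A j = A j ∘ₗ A i) :
    ∃ φ : Dual F V, φ ≠ 0 ∧ ∀ j, φ ∘ₗ A j = 0 :=
  exists_ne_zero_forall_apply_eq_zero_of_commute (fun j => (A j).dualMap)
    (fun j => by rw [LinearMap.dualMap_comp_dualMap, hsq]; ext; simp)
    (fun i j => by rw [LinearMap.dualMap_comp_dualMap, LinearMap.dualMap_comp_dualMap, hcomm])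

/-- The first basis vector is any `y` outside the hyperplane `ker φ` that contains every range
`A j V`; the remaining ones come from the restrictions of the `A j` to `ker φ`. -/
theorem exists_basis_apply_mem_span_image_Ioi [FiniteDimensional F V] (n : ℕ)
    (hdim : finrank F V = n) (A : ι → V →ₗ[F] V) (hsq : ∀ j, A j ∘ₗ A j = 0)
    (hcomm : ∀ i j, A i ∘ₗ A j = A j ∘ₗ A i) :
    ∃ b : Basis (Fin n) F V, ∀ j q, A j (b q) ∈ span F (b '' Set.Ioi q) := by
  induction n generalizing V with
  | zero =>
    have : Subsingleton V := finrank_zero_iff.mp hdim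
    exact ⟨Basis.empty V, fun _ q => q.elim0⟩
  | succ n ih =>
    have : Nontrivial V := nontrivial_of_finrank_pos (R := F) (by omega)
    obtain ⟨φ, hφ, hφA⟩ := exists_dual_ne_zero_forall_comp_eq_zero_of_commute A hsq hcomm
    set N := LinearMap.ker φ
    have hAN : ∀ j x, A j x ∈ N := fun j x => LinearMap.congr_fun (hφA j) x
    let A' : ι → N →ₗ[F] N := fun j => (A j).restrict fun x _ => hAN j x
    obtain ⟨b', hb'⟩ := ih (V := N)
      (Nat.succ_injective ((Dual.finrank_ker_add_one_of_ne_zero hφ).trans hdim)) A'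
      (fun j => LinearMap.ext fun x => Subtype.ext (LinearMap.congr_fun (hsq j) x))
      (fun i j => LinearMap.ext fun x => Subtype.ext (LinearMap.congr_fun (hcomm i j) x))
    obtain ⟨y, hy⟩ := LinearMap.surjective hφ 1
    let b := Basis.mkFinCons y b'
      (fun c x hx hcx => by simpa [hy, show φ x = 0 from hx] using congr_arg φ hcx)
      (fun z => ⟨-φ z, by simp [N, hy]⟩)
    have hb : ∀ (s : Set (Fin n)) (x : N), x ∈ span F (b' '' s) →
        (x : V) ∈ span F (b '' (Fin.succ '' s)) := by
      intro s x hx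
      simpa [Set.image_image, b] using apply_mem_span_image_of_mem_span N.subtype hx
    refine ⟨b, fun j q => ?_⟩
    induction q using Fin.cases with
    | zero =>
      rw [show b 0 = y by simp [b]]
      have hAy : (⟨A j y, hAN j y⟩ : N) ∈ span F (b' '' Set.univ) := by simp [b'.span_eq]
      refine span_mono (Set.image_mono ?_) (hb _ _ hAy)
      rintro _ ⟨p, -, rfl⟩
      exact Fin.succ_pos p
    | succ i =>
      rw [show b i.succ = b' i by simp [b]]
      refine span_mono (Set.image_mono ?_) (hb _ (A' j (b' i)) (hb' j i))
      rintro _ ⟨p, hp, rfl⟩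
      exact Fin.succ_lt_succ_iff.mpr hp

end Triangular

/-- If `A₁, …, A_k` are commuting square-zero endomorphisms of an `n`-dimensional vector
space `V` over a field `F`, then there is a basis of `V` in which all the `Aⱼ` are
simultaneously strictly lower triangular. -/
theorem simultaneous_strictly_lower_triangular
    (F : Type*) [Field F] (V : Type*) [AddCommGroup V] [Module F V]
    [FiniteDimensional F V] (n k : ℕ) (hdim : Module.finrank F V = n)
    (A : Fin k → V →ₗ[F] V)
    (hsq : ∀ j, A j ∘ₗ A j = 0)
    (hcomm : ∀ i j, A i ∘ₗ A j = A j ∘ₗ A i) :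
    ∃ b : Module.Basis (Fin n) F V, ∀ (j : Fin k) (p q : Fin n), p ≤ q →
      LinearMap.toMatrix b b (A j) p q = 0 := by
  obtain ⟨b, hb⟩ := exists_basis_apply_mem_span_image_Ioi n hdim A hsq hcomm
  refine ⟨b, fun j p q hpq => ?_⟩
  have hsupp := b.mem_span_image.mp (hb j q)
  rw [LinearMap.toMatrix_apply, ← Finsupp.notMem_support_iff]
  exact fun hp => (hsupp hp).not_ge hpq
end
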